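/- arXiv:1908.06179 — 8 statements merged into one kernel-verified Lean document; each statement's English description precedes it below -/
import Mathlib

section
/- Let d ≥ 1 be an integer and λ > 0 a real number. Let E ⊆ F ⊆ ℝ^d be measurable sets with 0 < |E| < |F| < ∞, let ρ > 0 be such that |E| = |B_ρ| (the measure of a ball of radius ρ), and let x ∈ ℝ^d be such that the ball B_{2ρ}(x) of center x and radius 2ρ is contained in F. Then ∫_{F \ E} |x - y|^{-λ} dy ≥ C_{d,λ} |E|^{1 - λ/d}, for some positive constant C_{d,λ} depending only on d and λ. -/
open MeasureTheory Real Filter ENNReal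

noncomputable def nlI (d : ℕ) (p δ : ℝ) (u : EuclideanSpace ℝ (Fin d) → ℝ)
    (O : Set (EuclideanSpace ℝ (Fin d))) : ℝ≥0∞ :=
  ∫⁻ x in O, ∫⁻ y in O,
    (if δ < |u x - u y| then ENNReal.ofReal (δ ^ p / ‖x - y‖ ^ ((d : ℝ) + p)) else 0)

lemma key_real (d : ℕ) (hd : 1 ≤ d) (lam ρ ω : ℝ) (hρ : 0 < ρ)
    (hω : 0 < ω) :
    (2:ℝ)^(-lam) * ((2:ℝ)^d - 1) * ω^(lam/d) * ((ρ^d * ω)^(1 - lam/d)) =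
    (2*ρ)^(-lam) * (((2:ℝ)^d - 1) * ρ^d) * ω := by
  have hd0 : (0:ℝ) < d := by exact_mod_cast hd
  have hρd : (0:ℝ) < ρ ^ d := by positivity
  rw [Real.mul_rpow hρd.le hω.le, Real.mul_rpow (by norm_num) hρ.le,
    ← Real.rpow_natCast ρ d, ← Real.rpow_mul hρ.le]
  have h1 : (d:ℝ) * (1 - lam/d) = (d:ℝ) - lam := by field_simp
  rw [h1]
  have h2 : ρ ^ ((d:ℝ) - lam) = ρ ^ (-lam) * ρ ^ (d:ℝ) := by
    rw [← Real.rpow_add hρ]; ring_nf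
  have h3 : ω ^ (lam/d) * ω ^ (1 - lam/d) = ω := by
    rw [← Real.rpow_add hω]; norm_num
  rw [h2]
  calc (2:ℝ)^(-lam) * ((2:ℝ)^d - 1) * ω^(lam/d) * (ρ ^ (-lam) * ρ ^ (d:ℝ) * ω^(1 - lam/d))
      = (2:ℝ)^(-lam) * ρ ^ (-lam) * (((2:ℝ)^d - 1) * ρ ^ (d:ℝ)) * (ω^(lam/d) * ω^(1 - lam/d)) := by ring
    _ = _ := by rw [h3]

/-- Lemma 1, first inequality. -/
theorem stmt5 (d : ℕ) (hd : 1 ≤ d) (lam : ℝ) (hlam : 0 < lam) :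
    ∃ C : ℝ, 0 < C ∧
      ∀ E F : Set (EuclideanSpace ℝ (Fin d)), MeasurableSet E → MeasurableSet F → E ⊆ F →
      0 < volume E → volume E < volume F → volume F < ⊤ →
      ∀ ρ : ℝ, 0 < ρ → volume E = volume (Metric.ball (0 : EuclideanSpace ℝ (Fin d)) ρ) →
      ∀ x : EuclideanSpace ℝ (Fin d), Metric.ball x (2 * ρ) ⊆ F →
      ENNReal.ofReal (C * (volume E).toReal ^ (1 - lam / d)) ≤
        ∫⁻ y in F \ E, ENNReal.ofReal (‖x - y‖ ^ (-lam)) := by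
  haveI : Nontrivial (EuclideanSpace ℝ (Fin d)) :=
    Module.nontrivial_of_finrank_pos (R := ℝ) (by rw [finrank_euclideanSpace_fin]; omega)
  set v : ℝ≥0∞ := volume (Metric.ball (0 : EuclideanSpace ℝ (Fin d)) 1) with hv
  have hv_pos : 0 < v := Metric.measure_ball_pos _ _ one_pos
  have hv_top : v ≠ ⊤ := measure_ball_lt_top.ne
  set ω : ℝ := v.toReal with hωdef
  have hω_pos : 0 < ω := ENNReal.toReal_pos hv_pos.ne' hv_top
  have h2d : (1:ℝ) < 2 ^ d := one_lt_pow₀ (by norm_num) (by omega)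
  refine ⟨2 ^ (-lam) * ((2:ℝ)^d - 1) * ω ^ (lam / d), by
    have := sub_pos.mpr h2d; positivity, ?_⟩
  intro E F hEm hFm hEF hE0 hEF' hFtop ρ hρ hEρ x hball
  -- volumes
  have hvol_ball : ∀ r : ℝ, 0 ≤ r →
      volume (Metric.ball (x : EuclideanSpace ℝ (Fin d)) r) = ENNReal.ofReal (r ^ d) * v := by
    intro r hr
    rw [Measure.addHaar_ball volume x hr, finrank_euclideanSpace_fin]
  have hvolE : volume E = ENNReal.ofReal (ρ ^ d) * v := by
    rw [hEρ, Measure.addHaar_ball volume _ hρ.le, finrank_euclideanSpace_fin]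
  have hEtop : volume E ≠ ⊤ := (hEF'.trans hFtop).ne
  have hEtoReal : (volume E).toReal = ρ ^ d * ω := by
    rw [hvolE, ENNReal.toReal_mul, ENNReal.toReal_ofReal (by positivity)]
  set B := Metric.ball x (2 * ρ) with hB
  -- lower bound on volume of B \ E
  have hvolB : volume B = ENNReal.ofReal ((2*ρ) ^ d) * v := hvol_ball _ (by positivity)
  have hsplit : ENNReal.ofReal ((2*ρ)^d) * v
      = ENNReal.ofReal (((2:ℝ)^d - 1) * ρ^d) * v + ENNReal.ofReal (ρ^d) * v := by
    rw [← add_mul, ← ENNReal.ofReal_add (mul_nonneg (by linarith) (by positivity)) (by positivity)]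
    congr 2
    rw [mul_pow]; ring
  have hBE : ENNReal.ofReal (((2:ℝ)^d - 1) * ρ^d) * v ≤ volume (B \ E) := by
    have h1 : volume B ≤ volume (B \ E) + volume E := by
      calc volume B ≤ volume ((B \ E) ∪ E) := measure_mono (by intro y hy; by_cases h : y ∈ E <;> simp [h, hy])
        _ ≤ volume (B \ E) + volume E := measure_union_le _ _
    rw [hvolB, hsplit] at h1
    exact (ENNReal.add_le_add_iff_right hEtop).mp (by rw [hvolE] at h1 ⊢; exact h1)
  -- pointwise bound
  have hae : ∀ᵐ y ∂(volume.restrict (B \ E)),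
      ENNReal.ofReal ((2*ρ) ^ (-lam)) ≤ ENNReal.ofReal (‖x - y‖ ^ (-lam)) := by
    have hmem : ∀ᵐ y ∂(volume.restrict (B \ E)), y ∈ B \ E :=
      ae_restrict_mem (Metric.isOpen_ball.measurableSet.diff hEm)
    have hne : ∀ᵐ y ∂(volume.restrict (B \ E)), y ≠ x := by
      refine ae_restrict_of_ae ?_
      have : volume ({x} : Set (EuclideanSpace ℝ (Fin d))) = 0 := measure_singleton x
      filter_upwards [measure_eq_zero_iff_ae_notMem.mp this] with y hy
      simpa using hy
    filter_upwards [hmem, hne] with y hy hyne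
    apply ENNReal.ofReal_le_ofReal
    have h1 : 0 < ‖x - y‖ := by
      rw [norm_pos_iff]; intro h; apply hyne; rw [sub_eq_zero] at h; exact h.symm
    have h2 : ‖x - y‖ ≤ 2 * ρ := by
      have := hy.1
      rw [Metric.mem_ball, dist_comm] at this
      rw [← dist_eq_norm]; exact this.le
    exact Real.rpow_le_rpow_of_nonpos h1 h2 (neg_nonpos.mpr hlam.le)
  -- combine
  calc ENNReal.ofReal (2 ^ (-lam) * ((2:ℝ)^d - 1) * ω ^ (lam / d) * (volume E).toReal ^ (1 - lam / d))
      = ENNReal.ofReal ((2*ρ)^(-lam) * (((2:ℝ)^d - 1) * ρ^d) * ω) := by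
        rw [hEtoReal, key_real d hd lam ρ ω hρ hω_pos]
    _ = ENNReal.ofReal ((2*ρ)^(-lam)) * (ENNReal.ofReal (((2:ℝ)^d - 1) * ρ^d) * v) := by
        have hnn1 : (0:ℝ) ≤ ((2:ℝ)^d - 1) * ρ^d := mul_nonneg (by linarith) (by positivity)
        rw [mul_assoc, ENNReal.ofReal_mul (by positivity : (0:ℝ) ≤ (2*ρ)^(-lam)),
          ENNReal.ofReal_mul hnn1, hωdef, ENNReal.ofReal_toReal hv_top]
    _ ≤ ENNReal.ofReal ((2*ρ)^(-lam)) * volume (B \ E) := by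
        exact mul_le_mul_right hBE _
    _ = ∫⁻ _ in B \ E, ENNReal.ofReal ((2*ρ)^(-lam)) := by rw [setLIntegral_const]
    _ ≤ ∫⁻ y in B \ E, ENNReal.ofReal (‖x - y‖ ^ (-lam)) := lintegral_mono_ae hae
    _ ≤ ∫⁻ y in F \ E, ENNReal.ofReal (‖x - y‖ ^ (-lam)) :=
        lintegral_mono_set (Set.diff_subset_diff_left hball)
end

section
/- Let d ≥ 1 be an integer and p ≥ 1 a real number. Let E ⊆ F ⊆ ℝ^d be measurable sets with 0 < |E| < |F| < ∞, let ρ > 0 be such that |E| = |B_ρ|, and let D ⊆ F be a measurable set such that for almost every x ∈ D the ball B_{2ρ}(x) is contained in F. Then ∫_D ∫_{F \ E} |x - y|^{-(d+p)} dy dx ≥ C_{d,p} |D| |E|^{-p/d}, for some positive constant C_{d,p} depending only on d and p. -/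
open MeasureTheory Real Filter ENNReal

/-- Lemma 1, second inequality. -/
theorem stmt6 (d : ℕ) (hd : 1 ≤ d) (p : ℝ) (hp : 1 ≤ p) :
    ∃ C : ℝ, 0 < C ∧
      ∀ E F : Set (EuclideanSpace ℝ (Fin d)), MeasurableSet E → MeasurableSet F → E ⊆ F →
      0 < volume E → volume E < volume F → volume F < ⊤ →
      ∀ ρ : ℝ, 0 < ρ → volume E = volume (Metric.ball (0 : EuclideanSpace ℝ (Fin d)) ρ) →
      ∀ D : Set (EuclideanSpace ℝ (Fin d)), MeasurableSet D → D ⊆ F →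
      (∀ᵐ x ∂(volume.restrict D), Metric.ball x (2 * ρ) ⊆ F) →
      ENNReal.ofReal C * volume D * ENNReal.ofReal ((volume E).toReal ^ (-(p / d))) ≤
        ∫⁻ x in D, ∫⁻ y in F \ E, ENNReal.ofReal (‖x - y‖ ^ (-((d : ℝ) + p))) := by
  haveI : Nonempty (Fin d) := ⟨⟨0, hd⟩⟩
  haveI : Nontrivial (EuclideanSpace ℝ (Fin d)) := inferInstance
  have hdR : (1 : ℝ) ≤ d := by exact_mod_cast hd
  have hdpos : (0 : ℝ) < d := lt_of_lt_of_le one_pos hdR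
  set ωB := volume (Metric.ball (0 : EuclideanSpace ℝ (Fin d)) 1) with hωBdef
  have hωB_pos : 0 < ωB := Metric.measure_ball_pos _ _ one_pos
  have hωB_lt : ωB < ⊤ := measure_ball_lt_top
  set ω := ωB.toReal with hωdef
  have hω : 0 < ω := ENNReal.toReal_pos hωB_pos.ne' hωB_lt.ne
  have h2d : (1 : ℝ) < 2 ^ (d : ℝ) :=
    Real.one_lt_rpow_iff_of_pos two_pos |>.2 (Or.inl ⟨one_lt_two, hdpos⟩)
  refine ⟨2 ^ (-((d : ℝ) + p)) * (2 ^ (d : ℝ) - 1) * ω ^ (1 + p / d), by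
    have h1 : (0:ℝ) < 2 ^ (-((d : ℝ) + p)) := Real.rpow_pos_of_pos two_pos _
    have h2 : (0:ℝ) < 2 ^ (d : ℝ) - 1 := by linarith
    have h3 : (0:ℝ) < ω ^ (1 + p / d) := Real.rpow_pos_of_pos hω _
    positivity, ?_⟩
  intro E F hE hF hEF hEpos hEltF hFlt ρ hρ hEρ D hD hDF hDball
  -- volume of balls
  have hball : ∀ (x : EuclideanSpace ℝ (Fin d)) (r : ℝ), 0 ≤ r →
      volume (Metric.ball x r) = ENNReal.ofReal (r ^ d) * ωB := by
    intro x r hr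
    rw [Measure.addHaar_ball volume x hr, finrank_euclideanSpace_fin]
  have hvolE : volume E = ENNReal.ofReal (ρ ^ d) * ωB := by
    rw [hEρ, hball 0 ρ hρ.le]
  -- the per-point constant lower bound
  set K : ℝ≥0∞ := ENNReal.ofReal ((2 * ρ) ^ (-((d : ℝ) + p))) *
      (ENNReal.ofReal ((2 ^ (d : ℝ) - 1) * ρ ^ d) * ωB) with hKdef
  -- inner integral bound for each good x
  have hinner : ∀ x : EuclideanSpace ℝ (Fin d), Metric.ball x (2 * ρ) ⊆ F →
      K ≤ ∫⁻ y in F \ E, ENNReal.ofReal (‖x - y‖ ^ (-((d : ℝ) + p))) := by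
    intro x hx
    set S := Metric.ball x (2 * ρ) \ E with hSdef
    have hSmeas : MeasurableSet S := measurableSet_ball.diff hE
    have hsub : S ⊆ F \ E := Set.diff_subset_diff_left hx
    have step1 : (∫⁻ y in S, ENNReal.ofReal (‖x - y‖ ^ (-((d : ℝ) + p)))) ≤
        ∫⁻ y in F \ E, ENNReal.ofReal (‖x - y‖ ^ (-((d : ℝ) + p))) :=
      lintegral_mono_set hsub
    refine le_trans ?_ step1
    -- constant bound on S, a.e. (excluding y = x)
    have hae : ∀ᵐ y ∂(volume.restrict S),
        ENNReal.ofReal ((2 * ρ) ^ (-((d : ℝ) + p))) ≤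
          ENNReal.ofReal (‖x - y‖ ^ (-((d : ℝ) + p))) := by
      have h1 : ∀ᵐ y ∂(volume.restrict S), y ∈ S := ae_restrict_mem hSmeas
      have h2 : ∀ᵐ y ∂(volume.restrict S), y ≠ x := by
        refine ae_restrict_of_ae ?_
        have : volume ({x} : Set (EuclideanSpace ℝ (Fin d))) = 0 := measure_singleton x
        filter_upwards [measure_eq_zero_iff_ae_notMem.1 this] with y hy
        simpa using hy
      filter_upwards [h1, h2] with y hyS hyx
      apply ENNReal.ofReal_le_ofReal
      have hne : (0:ℝ) < ‖x - y‖ := by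
        rw [norm_pos_iff, sub_ne_zero]
        exact fun h => hyx h.symm
      have hle : ‖x - y‖ ≤ 2 * ρ := by
        have := hyS.1
        rw [Metric.mem_ball, dist_comm] at this
        rw [← dist_eq_norm]
        exact this.le
      exact Real.rpow_le_rpow_of_nonpos hne hle (by have := hp; have := hdpos; linarith)
    have step2 : ENNReal.ofReal ((2 * ρ) ^ (-((d : ℝ) + p))) * volume S ≤
        ∫⁻ y in S, ENNReal.ofReal (‖x - y‖ ^ (-((d : ℝ) + p))) := by
      calc ENNReal.ofReal ((2 * ρ) ^ (-((d : ℝ) + p))) * volume S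
          = ∫⁻ _ in S, ENNReal.ofReal ((2 * ρ) ^ (-((d : ℝ) + p))) := by
            rw [setLIntegral_const]
        _ ≤ _ := lintegral_mono_ae hae
    refine le_trans ?_ step2
    rw [hKdef]
    refine mul_le_mul_right ?_ _
    -- volume S ≥ (2^d - 1) ρ^d ωB
    have hsb : volume (Metric.ball x (2 * ρ)) - volume E ≤ volume S :=
      le_measure_diff
    refine le_trans ?_ hsb
    rw [hball x (2 * ρ) (by positivity), hvolE]
    have hfin : ENNReal.ofReal (ρ ^ d) * ωB ≠ ⊤ := by
      exact ENNReal.mul_ne_top ENNReal.ofReal_ne_top hωB_lt.ne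
    rw [← ENNReal.sub_mul (fun _ _ => hωB_lt.ne), ← ENNReal.ofReal_sub _ (by positivity)]
    have : (2 * ρ) ^ d - ρ ^ d = (2 ^ (d : ℝ) - 1) * ρ ^ d := by
      rw [mul_pow, ← Real.rpow_natCast 2 d]
      ring
    rw [this]
  -- integrate over D
  have main : K * volume D ≤
      ∫⁻ x in D, ∫⁻ y in F \ E, ENNReal.ofReal (‖x - y‖ ^ (-((d : ℝ) + p))) := by
    calc K * volume D = ∫⁻ _ in D, K := by rw [setLIntegral_const]
      _ ≤ _ := by
          refine lintegral_mono_ae ?_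
          filter_upwards [hDball] with x hx
          exact hinner x hx
  refine le_trans ?_ main
  -- compare constants
  have htoReal : (volume E).toReal = ρ ^ d * ω := by
    rw [hvolE, ENNReal.toReal_mul, ENNReal.toReal_ofReal (by positivity)]
  rw [htoReal]
  have hωB_eq : ωB = ENNReal.ofReal ω := (ENNReal.ofReal_toReal hωB_lt.ne).symm
  have key : ENNReal.ofReal (2 ^ (-((d : ℝ) + p)) * (2 ^ (d : ℝ) - 1) * ω ^ (1 + p / d)) *
      ENNReal.ofReal ((ρ ^ d * ω) ^ (-(p / d))) ≤ K := by
    have hC0 : (0:ℝ) ≤ 2 ^ (-((d : ℝ) + p)) * (2 ^ (d : ℝ) - 1) * ω ^ (1 + p / d) := by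
      have h1 : (0:ℝ) < 2 ^ (-((d : ℝ) + p)) := Real.rpow_pos_of_pos two_pos _
      have h3 : (0:ℝ) < ω ^ (1 + p / d) := Real.rpow_pos_of_pos hω _
      exact mul_nonneg (mul_nonneg h1.le (by linarith)) h3.le
    have hA0 : (0:ℝ) ≤ (2 ^ (d : ℝ) - 1) * ρ ^ d := by
      exact mul_nonneg (by linarith) (pow_pos hρ d).le
    have hB0 : (0:ℝ) ≤ (2 * ρ) ^ (-((d : ℝ) + p)) := (Real.rpow_pos_of_pos (by linarith) _).le
    rw [hKdef, hωB_eq, ← ENNReal.ofReal_mul hC0, ← ENNReal.ofReal_mul hA0,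
      ← ENNReal.ofReal_mul hB0]
    apply ENNReal.ofReal_le_ofReal
    apply le_of_eq
    have e1 : (ρ ^ d * ω) ^ (-(p / d)) = ρ ^ (-p) * ω ^ (-(p / d)) := by
      rw [Real.mul_rpow (by positivity) hω.le, ← Real.rpow_natCast ρ d,
        ← Real.rpow_mul hρ.le]
      congr 2
      field_simp
    have e2 : ω ^ (1 + p / d) * ω ^ (-(p / d)) = ω := by
      rw [← Real.rpow_add hω]
      simp
    have e3 : (2 * ρ) ^ (-((d : ℝ) + p)) = 2 ^ (-((d : ℝ) + p)) * ρ ^ (-((d : ℝ) + p)) :=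
      Real.mul_rpow two_pos.le hρ.le
    have e4 : ρ ^ (-((d : ℝ) + p)) * ρ ^ d = ρ ^ (-p) := by
      rw [← Real.rpow_natCast ρ d, ← Real.rpow_add hρ]
      congr 1
      ring
    rw [e1, e3]
    calc 2 ^ (-((d : ℝ) + p)) * (2 ^ (d : ℝ) - 1) * ω ^ (1 + p / d) *
          (ρ ^ (-p) * ω ^ (-(p / d)))
        = 2 ^ (-((d : ℝ) + p)) * (2 ^ (d : ℝ) - 1) * ρ ^ (-p) *
            (ω ^ (1 + p / d) * ω ^ (-(p / d))) := by ring
      _ = 2 ^ (-((d : ℝ) + p)) * (2 ^ (d : ℝ) - 1) * ρ ^ (-p) * ω := by rw [e2]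
      _ = 2 ^ (-((d : ℝ) + p)) * (2 ^ (d : ℝ) - 1) * (ρ ^ (-((d : ℝ) + p)) * ρ ^ d) * ω := by
          rw [e4]
      _ = 2 ^ (-((d : ℝ) + p)) * ρ ^ (-((d : ℝ) + p)) * ((2 ^ (d : ℝ) - 1) * ρ ^ d * ω) := by
          ring
  calc ENNReal.ofReal (2 ^ (-((d : ℝ) + p)) * (2 ^ (d : ℝ) - 1) * ω ^ (1 + p / d)) *
        volume D * ENNReal.ofReal ((ρ ^ d * ω) ^ (-(p / d)))
      = (ENNReal.ofReal (2 ^ (-((d : ℝ) + p)) * (2 ^ (d : ℝ) - 1) * ω ^ (1 + p / d)) *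
          ENNReal.ofReal ((ρ ^ d * ω) ^ (-(p / d)))) * volume D := by ring
    _ ≤ K * volume D := mul_le_mul_left key _
end

section
/- Let d ≥ 1 be an integer, let p ≥ 1 be a real number, and let δ > 0. For a measurable function u on the unit ball B_1 ⊆ ℝ^d, define its reflection extension ũ on B_{3/2} by ũ(x) = u(x) for |x| < 1 and ũ(x) = u( (2 - |x|) x / |x| ) for 1 ≤ |x| < 3/2. Then I_{δ,p}(ũ, B_{3/2}) ≤ C I_{δ,p}(u, B_1), for some positive constant C depending only on d and p. -/
open MeasureTheory Real Filter ENNReal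

/-!
The extension is `u ∘ Φ`, where `Φ = ballFold` is the identity on `B₁` and the radial reflection
`x ↦ (2 - ‖x‖) x / ‖x‖` outside it. `Φ` is `9`-Lipschitz, so every pair `(x, y)` that contributes
to the energy of `u ∘ Φ` has `‖x - y‖^{-(d+p)} ≤ 9^{d+p} ‖Φ x - Φ y‖^{-(d+p)}`. The reflection is an
involution that is `9`-Lipschitz on `{‖y‖ ≥ 1/2}` and the unit sphere is null, so `Φ` pushes
Lebesgue measure on `B_{3/2}` forward to at most `(1 + 9^d)` times Lebesgue measure on `B₁`.
Changing variables in both integrals gives the constant `9^{d+p} (1 + 9^d)²`.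
-/

open NNReal Metric Module

section Reflection

variable {E : Type*} [NormedAddCommGroup E] [NormedSpace ℝ E]

noncomputable def radialReflection (x : E) : E :=
  ((2 - ‖x‖) / ‖x‖) • x

noncomputable def ballFold (x : E) : E :=
  if ‖x‖ < 1 then x else radialReflection x

theorem radialReflection_eq (x : E) : radialReflection x = (2 : ℝ) • ‖x‖⁻¹ • x - x := by
  rcases eq_or_ne x 0 with rfl | hx
  · simp [radialReflection]
  · have : (2 - ‖x‖) / ‖x‖ = 2 * ‖x‖⁻¹ - 1 := by field_simp [norm_ne_zero_iff.2 hx]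
    rw [radialReflection, this, sub_smul, one_smul, mul_smul]

theorem norm_radialReflection {x : E} (hx : x ≠ 0) (h2 : ‖x‖ ≤ 2) :
    ‖radialReflection x‖ = 2 - ‖x‖ := by
  have hx : 0 < ‖x‖ := norm_pos_iff.2 hx
  rw [radialReflection, norm_smul, Real.norm_eq_abs, abs_div, abs_of_nonneg (by linarith),
    abs_of_pos hx, div_mul_cancel₀ _ hx.ne']

theorem radialReflection_radialReflection {x : E} (hx : x ≠ 0) (h2 : ‖x‖ < 2) :
    radialReflection (radialReflection x) = x := by
  have h2' : 0 < 2 - ‖x‖ := by linarith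
  have hcoef : (2 - (2 - ‖x‖)) / (2 - ‖x‖) * ((2 - ‖x‖) / ‖x‖) = 1 := by
    field_simp; ring
  rw [radialReflection, norm_radialReflection hx h2.le, radialReflection, smul_smul, hcoef,
    one_smul]

theorem norm_sub_radialReflection {x : E} (hx : x ≠ 0) :
    ‖x - radialReflection x‖ = 2 * |‖x‖ - 1| := by
  have hx : 0 < ‖x‖ := norm_pos_iff.2 hx
  have : x - radialReflection x = (2 * (‖x‖ - 1) / ‖x‖) • x := by
    rw [radialReflection, show 2 * (‖x‖ - 1) / ‖x‖ = 1 - (2 - ‖x‖) / ‖x‖ by field_simp; ring,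
      sub_smul, one_smul]
  rw [this, norm_smul, Real.norm_eq_abs, abs_div, abs_mul, abs_of_pos hx, abs_two,
    div_mul_cancel₀ _ hx.ne']

theorem norm_inv_norm_smul_sub_inv_norm_smul_le {x : E} (hx : x ≠ 0) (y : E) :
    ‖‖x‖⁻¹ • x - ‖y‖⁻¹ • y‖ ≤ 2 * ‖x‖⁻¹ * ‖x - y‖ := by
  have hx : 0 < ‖x‖ := norm_pos_iff.2 hx
  have hsplit : ‖x‖⁻¹ • x - ‖y‖⁻¹ • y = ‖x‖⁻¹ • (x - y) + (‖x‖⁻¹ - ‖y‖⁻¹) • y := by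
    rw [smul_sub, sub_smul]; abel
  have hsecond : ‖(‖x‖⁻¹ - ‖y‖⁻¹) • y‖ ≤ ‖x‖⁻¹ * ‖x - y‖ := by
    rcases eq_or_ne y 0 with rfl | hy
    · simpa using mul_nonneg (inv_nonneg.2 hx.le) hx.le
    have hy : 0 < ‖y‖ := norm_pos_iff.2 hy
    have : ‖(‖x‖⁻¹ - ‖y‖⁻¹) • y‖ = ‖x‖⁻¹ * |‖y‖ - ‖x‖| := by
      rw [norm_smul, Real.norm_eq_abs, inv_sub_inv hx.ne' hy.ne', abs_div,
        abs_of_pos (mul_pos hx hy)]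
      field_simp
    rw [this]
    gcongr
    exact abs_norm_sub_norm_le y x |>.trans_eq (norm_sub_rev y x)
  calc ‖‖x‖⁻¹ • x - ‖y‖⁻¹ • y‖
      ≤ ‖‖x‖⁻¹ • (x - y)‖ + ‖(‖x‖⁻¹ - ‖y‖⁻¹) • y‖ := hsplit ▸ norm_add_le _ _
    _ ≤ ‖x‖⁻¹ * ‖x - y‖ + ‖x‖⁻¹ * ‖x - y‖ := by
        rw [norm_smul, Real.norm_of_nonneg (inv_nonneg.2 hx.le)]; gcongr
    _ = 2 * ‖x‖⁻¹ * ‖x - y‖ := by ring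

theorem lipschitzOnWith_radialReflection :
    LipschitzOnWith 9 (radialReflection (E := E)) {x | 1 / 2 ≤ ‖x‖} := by
  refine LipschitzOnWith.of_dist_le_mul fun x hx y hy => ?_
  simp only [Set.mem_ofPred_eq] at hx hy
  have hx0 : x ≠ 0 := norm_pos_iff.1 (by linarith)
  have hinv : ‖x‖⁻¹ ≤ 2 := by
    rw [inv_le_comm₀ (by linarith) two_pos]; linarith
  have hunit := norm_inv_norm_smul_sub_inv_norm_smul_le hx0 y
  rw [dist_eq_norm, dist_eq_norm, radialReflection_eq, radialReflection_eq]
  calc ‖(2 : ℝ) • ‖x‖⁻¹ • x - x - ((2 : ℝ) • ‖y‖⁻¹ • y - y)‖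
      = ‖(2 : ℝ) • (‖x‖⁻¹ • x - ‖y‖⁻¹ • y) - (x - y)‖ := by rw [smul_sub]; abel_nf
    _ ≤ 2 * ‖‖x‖⁻¹ • x - ‖y‖⁻¹ • y‖ + ‖x - y‖ := by
        refine (norm_sub_le _ _).trans_eq ?_
        rw [norm_smul, Real.norm_two]
    _ ≤ 2 * (2 * 2 * ‖x - y‖) + ‖x - y‖ := by
        gcongr
        exact hunit.trans (by gcongr)
    _ = 9 * ‖x - y‖ := by ring

theorem norm_sub_radialReflection_le {x y : E} (hx : ‖x‖ < 1) (hy : 1 ≤ ‖y‖) :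
    ‖x - radialReflection y‖ ≤ 3 * ‖x - y‖ := by
  have hy0 : y ≠ 0 := norm_pos_iff.1 (by linarith)
  have hgap : ‖y‖ - 1 ≤ ‖x - y‖ := by
    linarith [norm_sub_norm_le y x, norm_sub_rev x y]
  calc ‖x - radialReflection y‖ = ‖(x - y) + (y - radialReflection y)‖ := by abel_nf
    _ ≤ ‖x - y‖ + ‖y - radialReflection y‖ := norm_add_le _ _
    _ = ‖x - y‖ + 2 * (‖y‖ - 1) := by
        rw [norm_sub_radialReflection hy0, abs_of_nonneg (by linarith)]
    _ ≤ 3 * ‖x - y‖ := by linarith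

theorem lipschitzWith_ballFold : LipschitzWith 9 (ballFold (E := E)) := by
  refine LipschitzWith.of_dist_le_mul fun x y => ?_
  rw [dist_eq_norm, dist_eq_norm, ballFold, ballFold]
  have hxy := norm_nonneg (x - y)
  push_cast
  split_ifs with hx hy hy
  · linarith
  · linarith [norm_sub_radialReflection_le hx (not_lt.1 hy)]
  · linarith [norm_sub_radialReflection_le hy (not_lt.1 hx), norm_sub_rev x y,
      norm_sub_rev (radialReflection x) y]
  · simpa [dist_eq_norm] using lipschitzOnWith_radialReflection.dist_le_mul x
      (show 1 / 2 ≤ ‖x‖ by linarith [not_lt.1 hx]) y (show 1 / 2 ≤ ‖y‖ by linarith [not_lt.1 hy])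

end Reflection

section Volume

variable {V : Type*} [NormedAddCommGroup V] [InnerProductSpace ℝ V] [FiniteDimensional ℝ V]
  [MeasurableSpace V] [BorelSpace V]

theorem LipschitzOnWith.volume_image_le {K : ℝ≥0} {f : V → V} {s : Set V}
    (hf : LipschitzOnWith K f s) : volume (f '' s) ≤ (K ^ finrank ℝ V : ℝ≥0) * volume s := by
  rw [← InnerProductSpace.euclideanHausdorffMeasure_eq_volume,
    Measure.euclideanHausdorffMeasure_def, Measure.smul_apply, Measure.smul_apply,
    ENNReal.smul_def, ENNReal.smul_def, smul_eq_mul, smul_eq_mul, mul_left_comm]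
  gcongr
  simpa using hf.hausdorffMeasure_image_le (d := finrank ℝ V) (Nat.cast_nonneg _)

theorem map_ballFold_restrict_ball_le :
    (volume.restrict (ball (0 : V) (3 / 2))).map ballFold ≤
      ((1 + 9 ^ finrank ℝ V : ℝ≥0) : ℝ≥0∞) • volume.restrict (ball (0 : V) 1) := by
  have hFold : Measurable (ballFold (E := V)) := lipschitzWith_ballFold.continuous.measurable
  refine Measure.le_iff.2 fun s hs => ?_
  rw [Measure.map_apply hFold hs, Measure.restrict_apply (hFold hs), Measure.smul_apply,
    Measure.restrict_apply hs, smul_eq_mul]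
  set t := s ∩ (ball (0 : V) 1 \ closedBall 0 (1 / 2))
  have hcover : ballFold ⁻¹' s ∩ ball 0 (3 / 2) ⊆
      (s ∩ ball 0 1) ∪ sphere (0 : V) 1 ∪ radialReflection '' t := by
    rintro x ⟨hxs, hxb⟩
    rw [Set.mem_preimage] at hxs
    rw [mem_ball_zero_iff] at hxb
    rcases lt_trichotomy ‖x‖ 1 with h1 | h1 | h1
    · rw [ballFold, if_pos h1] at hxs
      exact .inl (.inl ⟨hxs, mem_ball_zero_iff.2 h1⟩)
    · exact .inl (.inr (mem_sphere_zero_iff_norm.2 h1))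
    · have hx0 : x ≠ 0 := norm_pos_iff.1 (by linarith)
      rw [ballFold, if_neg h1.not_gt] at hxs
      have hnorm := norm_radialReflection hx0 (by linarith)
      refine .inr ⟨radialReflection x, ⟨hxs, ?_, ?_⟩,
        radialReflection_radialReflection hx0 (by linarith)⟩
      · rw [mem_ball_zero_iff, hnorm]; linarith
      · rw [mem_closedBall_zero_iff, hnorm]; linarith
  have ht : t ⊆ {y | 1 / 2 ≤ ‖y‖} := fun y ⟨_, _, hy⟩ => by
    simpa using (not_le.1 (mt mem_closedBall_zero_iff.2 hy)).le
  calc volume (ballFold ⁻¹' s ∩ ball 0 (3 / 2))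
      ≤ volume (s ∩ ball 0 1) + volume (sphere (0 : V) 1) + volume (radialReflection '' t) :=
        (measure_mono hcover).trans <|
          (measure_union_le _ _).trans (add_le_add_left (measure_union_le _ _) _)
    _ ≤ volume (s ∩ ball 0 1) + 0 + (9 ^ finrank ℝ V : ℝ≥0) * volume (s ∩ ball 0 1) := by
        rw [Measure.addHaar_sphere_of_ne_zero _ _ one_ne_zero]
        gcongr
        exact (lipschitzOnWith_radialReflection.mono ht).volume_image_le.trans
          (by gcongr; exact fun y hy => ⟨hy.1, hy.2.1⟩)
    _ = ((1 + 9 ^ finrank ℝ V : ℝ≥0) : ℝ≥0∞) * volume (s ∩ ball 0 1) := by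
        push_cast; ring

end Volume

theorem MeasureTheory.lintegral_comp_le_of_map_le {α β : Type*} [MeasurableSpace α]
    [MeasurableSpace β] {μ : Measure α} {ν : Measure β} {Φ : α → β} {c : ℝ≥0∞}
    (hΦ : Measurable Φ) (hμν : μ.map Φ ≤ c • ν) {f : β → ℝ≥0∞} (hf : Measurable f) :
    ∫⁻ x, f (Φ x) ∂μ ≤ c * ∫⁻ y, f y ∂ν := by
  rw [← lintegral_map hf hΦ, ← smul_eq_mul, ← lintegral_smul_measure]
  exact lintegral_mono' hμν le_rfl

section NonlocalEnergy

variable {d : ℕ} {p δ : ℝ} {u : EuclideanSpace ℝ (Fin d) → ℝ}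

noncomputable def nlKernel (d : ℕ) (p δ : ℝ) (u : EuclideanSpace ℝ (Fin d) → ℝ)
    (x y : EuclideanSpace ℝ (Fin d)) : ℝ≥0∞ :=
  if δ < |u x - u y| then ENNReal.ofReal (δ ^ p / ‖x - y‖ ^ ((d : ℝ) + p)) else 0

theorem nlI_eq_lintegral_nlKernel (O : Set (EuclideanSpace ℝ (Fin d))) :
    nlI d p δ u O = ∫⁻ x in O, ∫⁻ y in O, nlKernel d p δ u x y :=
  rfl

theorem measurable_nlKernel (hu : Measurable u) :
    Measurable (Function.uncurry (nlKernel d p δ u)) := by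
  refine Measurable.ite ?_ ?_ measurable_const
  · exact measurableSet_lt measurable_const
      ((hu.comp measurable_fst).sub (hu.comp measurable_snd)).abs
  · exact ENNReal.measurable_ofReal.comp
      (measurable_const.div ((measurable_fst.sub measurable_snd).norm.pow measurable_const))

theorem nlKernel_comp_le (hδ : 0 ≤ δ) (hq : 0 ≤ (d : ℝ) + p) {L : ℝ≥0}
    {Φ : EuclideanSpace ℝ (Fin d) → EuclideanSpace ℝ (Fin d)} (hΦ : LipschitzWith L Φ)
    (x y : EuclideanSpace ℝ (Fin d)) :
    nlKernel d p δ (u ∘ Φ) x y ≤ (L ^ ((d : ℝ) + p) : ℝ≥0) * nlKernel d p δ u (Φ x) (Φ y) := by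
  unfold nlKernel
  simp only [Function.comp_apply]
  split_ifs with h
  · have hΦne : 0 < ‖Φ x - Φ y‖ := by
      refine norm_pos_iff.2 (sub_ne_zero.2 fun heq => ?_)
      rw [heq, sub_self, abs_zero] at h
      linarith
    have hlip : ‖Φ x - Φ y‖ ≤ L * ‖x - y‖ := by simpa [dist_eq_norm] using hΦ.dist_le_mul x y
    have hxy : 0 < ‖x - y‖ :=
      pos_of_mul_pos_right (hΦne.trans_le hlip) L.coe_nonneg
    rw [← ENNReal.ofReal_coe_nnreal, ← ENNReal.ofReal_mul (by positivity), NNReal.coe_rpow]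
    refine ENNReal.ofReal_le_ofReal ?_
    rw [mul_div_assoc', div_le_div_iff₀ (by positivity) (by positivity)]
    calc δ ^ p * ‖Φ x - Φ y‖ ^ ((d : ℝ) + p)
        ≤ δ ^ p * (L * ‖x - y‖) ^ ((d : ℝ) + p) := by gcongr
      _ = (L : ℝ) ^ ((d : ℝ) + p) * δ ^ p * ‖x - y‖ ^ ((d : ℝ) + p) := by
        rw [Real.mul_rpow L.coe_nonneg (norm_nonneg _)]; ring
  · exact zero_le

theorem nlI_comp_le (hδ : 0 ≤ δ) (hq : 0 ≤ (d : ℝ) + p) (hu : Measurable u) {L c : ℝ≥0}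
    {Φ : EuclideanSpace ℝ (Fin d) → EuclideanSpace ℝ (Fin d)} (hΦ : LipschitzWith L Φ)
    {O O' : Set (EuclideanSpace ℝ (Fin d))}
    (hmap : (volume.restrict O).map Φ ≤ (c : ℝ≥0∞) • volume.restrict O') :
    nlI d p δ (u ∘ Φ) O ≤ (L ^ ((d : ℝ) + p) * c ^ 2 : ℝ≥0) * nlI d p δ u O' := by
  have hΦm : Measurable Φ := hΦ.continuous.measurable
  have hG := measurable_nlKernel (p := p) (δ := δ) hu
  set K : ℝ≥0∞ := ((L ^ ((d : ℝ) + p) : ℝ≥0) : ℝ≥0∞)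
  set H : EuclideanSpace ℝ (Fin d) → ℝ≥0∞ := fun a => ∫⁻ b in O', nlKernel d p δ u a b
  have hH : Measurable H := hG.lintegral_prod_right'
  have hinner : ∀ x, ∫⁻ y in O, nlKernel d p δ u (Φ x) (Φ y) ≤ c * H (Φ x) := fun x =>
    lintegral_comp_le_of_map_le hΦm hmap (hG.comp measurable_prodMk_left)
  calc nlI d p δ (u ∘ Φ) O
      ≤ ∫⁻ x in O, ∫⁻ y in O, K * nlKernel d p δ u (Φ x) (Φ y) :=
        lintegral_mono fun x => lintegral_mono fun y => nlKernel_comp_le hδ hq hΦ x y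
    _ = ∫⁻ x in O, K * ∫⁻ y in O, nlKernel d p δ u (Φ x) (Φ y) := by
        congr! 2 with x
        exact lintegral_const_mul _ ((hG.comp measurable_prodMk_left).comp hΦm)
    _ ≤ ∫⁻ x in O, K * c * H (Φ x) := lintegral_mono fun x => by
        rw [mul_assoc]
        gcongr
        exact hinner x
    _ = K * c * ∫⁻ x in O, H (Φ x) := lintegral_const_mul _ (hH.comp hΦm)
    _ ≤ K * c * (c * ∫⁻ a in O', H a) := by gcongr; exact lintegral_comp_le_of_map_le hΦm hmap hH
    _ = (L ^ ((d : ℝ) + p) * c ^ 2 : ℝ≥0) * nlI d p δ u O' := by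
        rw [nlI_eq_lintegral_nlKernel]; push_cast; ring

end NonlocalEnergy

theorem stmt11_general (d : ℕ) (p : ℝ) (hp : 1 ≤ p) :
    ∃ C : ℝ, 0 < C ∧ ∀ δ : ℝ, 0 < δ →
      ∀ u : EuclideanSpace ℝ (Fin d) → ℝ, Measurable u →
      nlI d p δ (fun x => if ‖x‖ < 1 then u x else u (((2 - ‖x‖) / ‖x‖) • x))
          (Metric.ball (0 : EuclideanSpace ℝ (Fin d)) (3 / 2)) ≤
        ENNReal.ofReal C * nlI d p δ u (Metric.ball (0 : EuclideanSpace ℝ (Fin d)) 1) := by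
  refine ⟨((9 ^ ((d : ℝ) + p) * (1 + 9 ^ d) ^ 2 : ℝ≥0) : ℝ), by positivity, fun δ hδ u hu => ?_⟩
  have hext : (fun x => if ‖x‖ < 1 then u x else u (((2 - ‖x‖) / ‖x‖) • x)) = u ∘ ballFold :=
    funext fun x => (apply_ite u _ _ _).symm
  have hmap := map_ballFold_restrict_ball_le (V := EuclideanSpace ℝ (Fin d))
  rw [finrank_euclideanSpace_fin] at hmap
  rw [hext, ENNReal.ofReal_coe_nnreal]
  exact nlI_comp_le hδ.le (by linarith [(Nat.cast_nonneg d : (0 : ℝ) ≤ d)]) hu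
    lipschitzWith_ballFold hmap

/-- the reflection extension controls the nonlocal energy. -/
theorem stmt11 (d : ℕ) (hd : 1 ≤ d) (p : ℝ) (hp : 1 ≤ p) :
    ∃ C : ℝ, 0 < C ∧ ∀ δ : ℝ, 0 < δ →
      ∀ u : EuclideanSpace ℝ (Fin d) → ℝ, Measurable u →
      nlI d p δ (fun x => if ‖x‖ < 1 then u x else u (((2 - ‖x‖) / ‖x‖) • x))
          (Metric.ball (0 : EuclideanSpace ℝ (Fin d)) (3 / 2)) ≤
        ENNReal.ofReal C * nlI d p δ u (Metric.ball (0 : EuclideanSpace ℝ (Fin d)) 1) :=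
  stmt11_general d p hp
end

section
/- Let d ≥ 1 be an integer, let p ≥ d be a real number, and let λ > p/d. Define u on the ball B_{1/e} ⊆ ℝ^d by u(x) = (ln λ)^{-1} ln ln (1/|x|). Then u ∈ L^1(B_{1/e}), u is essentially unbounded on B_{1/e} (u ∉ L^∞(B_{1/e})), and I_{1,p}(u, B_{1/e}) < +∞. -/
open MeasureTheory Real Filter ENNReal

/-!
`u` grows like `ln ln (1 / |x|)`, slower than any negative power of `|x|`, so it is integrable,
yet it tends to `+∞` at the origin. A jump `|u x - u y| > 1` means
`ln (1 / |x|) > λ ln (1 / |y|)` or the same with `x`, `y` exchanged, i.e. `|x| < |y| ^ λ`. For such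
pairs `|x - y| ≳ |y|`, and these `x` fill a ball of volume `≈ |y| ^ (λ d)`; so the inner integral
of the energy is `≲ |y| ^ (λ d - d - p)`, which is integrable near `0` exactly when `λ d > p`.
-/

open Metric Set Topology Module

lemma one_div_exp_one_lt_one : 1 / exp 1 < 1 :=
  (div_lt_one (exp_pos 1)).2 (one_lt_exp_iff.2 one_pos)

lemma one_le_log_one_div {r : ℝ} (hr : 0 < r) (hre : r ≤ 1 / exp 1) : 1 ≤ Real.log (1 / r) :=
  (le_log_iff_exp_le (by positivity)).2 ((le_one_div (exp_pos 1) hr).2 hre)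

lemma log_log_one_div_nonneg {r : ℝ} (hr : 0 ≤ r) (hre : r ≤ 1 / exp 1) :
    0 ≤ Real.log (Real.log (1 / r)) := by
  rcases hr.eq_or_lt with rfl | hr
  · simp
  · exact log_nonneg (one_le_log_one_div hr hre)

lemma abs_log_log_one_div_le {r : ℝ} (hr : 0 ≤ r) (hre : r ≤ 1 / exp 1) :
    |Real.log (Real.log (1 / r))| ≤ 2 * r ^ (-(1 / 2 : ℝ)) := by
  rcases hr.eq_or_lt with rfl | hr
  · simp
  have hlog := one_le_log_one_div hr hre
  rw [abs_of_nonneg (log_nonneg hlog)]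
  calc Real.log (Real.log (1 / r)) ≤ Real.log (1 / r) := log_le_self (by linarith)
    _ ≤ (1 / r) ^ (1 / 2 : ℝ) / (1 / 2) := log_le_rpow_div (by positivity) (by norm_num)
    _ = 2 * r ^ (-(1 / 2 : ℝ)) := by
      rw [rpow_neg hr.le, one_div r, inv_rpow hr.le]
      ring

lemma lt_rpow_of_log_add_log_log_lt {lam r s : ℝ} (hlam : 0 < lam) (hr : 0 < r) (hr1 : r < 1)
    (hs : 0 < s) (hs1 : s < 1)
    (h : Real.log lam + Real.log (Real.log (1 / s)) < Real.log (Real.log (1 / r))) :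
    r < s ^ lam := by
  have hls : 0 < Real.log (1 / s) := log_pos (one_lt_one_div hs hs1)
  have hlr : 0 < Real.log (1 / r) := log_pos (one_lt_one_div hr hr1)
  have hmul : lam * Real.log (1 / s) < Real.log (1 / r) := by
    rw [← log_lt_log_iff (by positivity) hlr, log_mul hlam.ne' hls.ne']
    exact h
  rw [lt_rpow_iff_log_lt hr hs]
  simp only [one_div, Real.log_inv] at hmul
  linarith

noncomputable def logLogProfile {E : Type*} [Norm E] (lam : ℝ) (x : E) : ℝ :=
  (Real.log lam)⁻¹ * Real.log (Real.log (1 / ‖x‖))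

section NormedGroup

variable {E : Type*} [NormedAddCommGroup E] {lam : ℝ}

lemma tendsto_logLogProfile (hlam : 1 < lam) :
    Tendsto (logLogProfile lam : E → ℝ) (𝓝[≠] 0) atTop := by
  have h : Tendsto (fun x : E => Real.log (Real.log ‖x‖⁻¹)) (𝓝[≠] 0) atTop :=
    tendsto_log_atTop.comp
      (tendsto_log_atTop.comp (tendsto_inv_nhdsGT_zero.comp tendsto_norm_nhdsNE_zero))
  unfold logLogProfile
  simp only [one_div]
  exact h.const_mul_atTop (inv_pos.2 (log_pos hlam))

lemma norm_lt_rpow_or_of_one_lt_sub (hlam : 1 < lam) {x y : E} (hx : ‖x‖ < 1)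
    (hy : ‖y‖ ≤ 1 / exp 1) (h : 1 < logLogProfile lam x - logLogProfile lam y) :
    ‖x‖ < ‖y‖ ^ lam ∨ ‖y‖ < ‖x‖ ^ lam := by
  have hloglam : 0 < Real.log lam := log_pos hlam
  have hjump :
      Real.log lam + Real.log (Real.log (1 / ‖y‖)) < Real.log (Real.log (1 / ‖x‖)) := by
    have := mul_lt_mul_of_pos_left h hloglam
    rw [logLogProfile, logLogProfile, ← mul_sub, ← mul_assoc, mul_inv_cancel₀ hloglam.ne',
      one_mul, mul_one] at this
    linarith
  rcases eq_or_ne x 0 with rfl | hx0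
  · have h0 : Real.log (Real.log (1 / ‖(0 : E)‖)) = 0 := by simp
    have := log_log_one_div_nonneg (norm_nonneg y) hy
    linarith
  rcases eq_or_ne y 0 with rfl | hy0
  · exact Or.inr (by simpa using rpow_pos_of_pos (norm_pos_iff.2 hx0) lam)
  · exact Or.inl (lt_rpow_of_log_add_log_log_lt (by linarith) (norm_pos_iff.2 hx0) hx
      (norm_pos_iff.2 hy0) (hy.trans_lt one_div_exp_one_lt_one) hjump)

lemma norm_lt_rpow_or_of_one_lt_abs_sub (hlam : 1 < lam) {x y : E} (hx : ‖x‖ < 1 / exp 1)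
    (hy : ‖y‖ < 1 / exp 1) (h : 1 < |logLogProfile lam x - logLogProfile lam y|) :
    ‖x‖ < ‖y‖ ^ lam ∨ ‖y‖ < ‖x‖ ^ lam := by
  rcases lt_abs.1 h with h | h
  · exact norm_lt_rpow_or_of_one_lt_sub hlam (hx.trans one_div_exp_one_lt_one) hy.le h
  · exact (norm_lt_rpow_or_of_one_lt_sub hlam (hy.trans one_div_exp_one_lt_one) hx.le
      (by linarith)).symm

end NormedGroup

lemma not_ae_restrict_le_of_tendsto_atTop {X : Type*} [TopologicalSpace X] [MeasurableSpace X]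
    {μ : Measure X} [μ.IsOpenPosMeasure] [NullSingletonClass μ] {f : X → ℝ} {a : X} {s : Set X}
    (hs : s ∈ 𝓝 a) (hf : Tendsto f (𝓝[≠] a) atTop) (C : ℝ) :
    ¬ ∀ᵐ x ∂μ.restrict s, f x ≤ C := by
  intro h
  obtain ⟨U, hUo, haU, hU⟩ := mem_nhdsWithin.1 (hf.eventually_gt_atTop C)
  set V := interior s ∩ U
  have hVo : IsOpen V := isOpen_interior.inter hUo
  have hV : ∀ᵐ x ∂μ.restrict V, f x ≤ C :=
    ae_restrict_of_ae_restrict_of_subset (inter_subset_left.trans interior_subset) h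
  have hlarge : V \ {a} ⊆ {x | ¬ f x ≤ C} ∩ V := fun x hx =>
    ⟨not_le.2 (hU ⟨hx.1.2, hx.2⟩), hx.1⟩
  have hpos : 0 < μ V := hVo.measure_pos μ ⟨a, mem_interior_iff_mem_nhds.2 hs, haU⟩
  have : μ V ≤ 0 := calc
    μ V = μ (V \ {a}) := (measure_sdiff_null (measure_singleton a)).symm
    _ ≤ μ ({x | ¬ f x ≤ C} ∩ V) := measure_mono hlarge
    _ ≤ μ.restrict V {x | ¬ f x ≤ C} := Measure.le_restrict_apply _ _
    _ = 0 := ae_iff.1 hV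
  exact hpos.not_ge this

section AddHaar

variable {E : Type*} [NormedAddCommGroup E] [NormedSpace ℝ E] [FiniteDimensional ℝ E]
  [MeasurableSpace E] [BorelSpace E] (μ : Measure E) [μ.IsAddHaarMeasure]

lemma integrableOn_logLogProfile (hd : 1 ≤ finrank ℝ E) (lam : ℝ) :
    IntegrableOn (logLogProfile lam) (ball (0 : E) (1 / exp 1)) μ := by
  refine integrableOn_ball_of_norm_le_rpow hd (C := 2 * |(Real.log lam)⁻¹|) (α := 1 / 2) ?_ ?_
    (by unfold logLogProfile; fun_prop : Measurable _).aestronglyMeasurable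
  · have : (1 : ℝ) ≤ finrank ℝ E := by exact_mod_cast hd
    linarith
  refine ae_restrict_of_forall_mem measurableSet_ball fun x hx => ?_
  rw [logLogProfile, norm_mul, norm_eq_abs, norm_eq_abs, mul_comm 2, mul_assoc]
  exact mul_le_mul_of_nonneg_left
    (abs_log_log_one_div_le (norm_nonneg x) (mem_ball_zero_iff.1 hx).le) (abs_nonneg _)

/-- Points of `ball 0 (‖y‖ ^ λ)` stay at distance `≳ ‖y‖` from `y`, since `λ > 1`. -/
lemma setLIntegral_ball_rpow_lam_le [Nontrivial E] {R lam s : ℝ} (hR : R < 1) (hlam : 1 < lam)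
    (hs : 0 ≤ s) {y : E} (hy : ‖y‖ ≤ R) :
    ∫⁻ x in ball 0 (‖y‖ ^ lam), ENNReal.ofReal (‖x - y‖ ^ (-s)) ∂μ ≤
      ENNReal.ofReal ((1 - R ^ (lam - 1)) ^ (-s) * ‖y‖ ^ (lam * finrank ℝ E - s)) *
        μ (ball 0 1) := by
  rcases eq_or_ne y 0 with rfl | hy0
  · simp [zero_rpow (by linarith : lam ≠ 0)]
  have hy0 : 0 < ‖y‖ := norm_pos_iff.2 hy0
  set c := 1 - R ^ (lam - 1)
  have hc : 0 < c := sub_pos.2 (rpow_lt_one ((norm_nonneg y).trans hy) hR (by linarith))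
  have hdist : ∀ x ∈ ball (0 : E) (‖y‖ ^ lam), c * ‖y‖ ≤ ‖x - y‖ := by
    intro x hx
    have hyl : ‖y‖ ^ lam ≤ R ^ (lam - 1) * ‖y‖ := by
      rw [← div_mul_cancel₀ (‖y‖ ^ lam) hy0.ne', ← rpow_sub_one hy0.ne']
      exact mul_le_mul_of_nonneg_right (rpow_le_rpow (norm_nonneg y) hy (by linarith)) hy0.le
    have := mem_ball_zero_iff.1 hx
    have := norm_sub_norm_le y x
    rw [norm_sub_rev] at this
    linarith
  calc ∫⁻ x in ball 0 (‖y‖ ^ lam), ENNReal.ofReal (‖x - y‖ ^ (-s)) ∂μ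
      ≤ ∫⁻ _ in ball 0 (‖y‖ ^ lam), ENNReal.ofReal ((c * ‖y‖) ^ (-s)) ∂μ :=
        setLIntegral_mono' measurableSet_ball fun x hx => ENNReal.ofReal_le_ofReal
          (rpow_le_rpow_of_nonpos (by positivity) (hdist x hx) (by linarith))
    _ = ENNReal.ofReal ((c * ‖y‖) ^ (-s)) *
          (ENNReal.ofReal ((‖y‖ ^ lam) ^ finrank ℝ E) * μ (ball 0 1)) := by
        rw [setLIntegral_const, Measure.addHaar_ball μ 0 (by positivity)]
    _ = _ := by
        rw [← mul_assoc, ← ENNReal.ofReal_mul (by positivity), mul_rpow hc.le hy0.le,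
          ← Real.rpow_natCast, ← rpow_mul hy0.le, sub_eq_neg_add, rpow_add hy0]
        ring_nf

lemma lintegral_setLIntegral_ball_rpow_lam_lt_top (hd : 1 ≤ finrank ℝ E) {R lam s : ℝ}
    (hR : R < 1) (hlam : 1 < lam) (hs0 : 0 ≤ s) (hs : s < (lam + 1) * finrank ℝ E) :
    ∫⁻ y in ball 0 R, ∫⁻ x in ball 0 (‖y‖ ^ lam), ENNReal.ofReal (‖x - y‖ ^ (-s)) ∂μ ∂μ < ⊤ := by
  have : Nontrivial E := Module.nontrivial_of_finrank_pos (R := ℝ) hd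
  set t := lam * finrank ℝ E - s
  have hint : IntegrableOn (fun y : E => ‖y‖ ^ t) (ball 0 R) μ := by
    refine integrableOn_ball_of_norm_le_rpow hd (C := 1) (α := -t) (by linarith)
      (ae_restrict_of_forall_mem measurableSet_ball fun y _ => ?_)
      (measurable_norm.pow_const t).aestronglyMeasurable
    rw [norm_of_nonneg (rpow_nonneg (norm_nonneg y) t), neg_neg, one_mul]
  calc ∫⁻ y in ball 0 R, ∫⁻ x in ball 0 (‖y‖ ^ lam), ENNReal.ofReal (‖x - y‖ ^ (-s)) ∂μ ∂μ
      ≤ ∫⁻ y in ball 0 R,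
          ENNReal.ofReal ((1 - R ^ (lam - 1)) ^ (-s) * ‖y‖ ^ t) * μ (ball 0 1) ∂μ :=
        setLIntegral_mono' measurableSet_ball fun y hy =>
          setLIntegral_ball_rpow_lam_le μ hR hlam hs0 (mem_ball_zero_iff.1 hy).le
    _ = (∫⁻ y in ball 0 R, ENNReal.ofReal ((1 - R ^ (lam - 1)) ^ (-s) * ‖y‖ ^ t) ∂μ) *
          μ (ball 0 1) := lintegral_mul_const' _ _ measure_ball_lt_top.ne
    _ < ⊤ := ENNReal.mul_lt_top ((hint.const_mul _).lintegral_lt_top) measure_ball_lt_top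

end AddHaar

/-- A pair with a jump of `u` larger than `1` is `λ`-lacunary in one order or the other;
Tonelli brings both orders to the same iterated integral, whence the factor `2`. -/
lemma lintegral_lintegral_one_lt_abs_sub_le {E : Type*} [NormedAddCommGroup E]
    [MeasurableSpace E] [BorelSpace E] [SecondCountableTopology E] (μ : Measure E) [SFinite μ]
    {lam : ℝ} (hlam : 1 < lam) (s : ℝ) :
    ∫⁻ x in ball (0 : E) (1 / exp 1), ∫⁻ y in ball 0 (1 / exp 1),
        (if 1 < |logLogProfile lam x - logLogProfile lam y|
          then ENNReal.ofReal (‖x - y‖ ^ (-s)) else 0) ∂μ ∂μ ≤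
      2 * ∫⁻ y in ball 0 (1 / exp 1),
        ∫⁻ x in ball 0 (‖y‖ ^ lam), ENNReal.ofReal (‖x - y‖ ^ (-s)) ∂μ ∂μ := by
  set B := ball (0 : E) (1 / exp 1)
  set G : E → E → ℝ≥0∞ := fun x y =>
    if ‖x‖ < ‖y‖ ^ lam then ENNReal.ofReal (‖x - y‖ ^ (-s)) else 0
  have hG : Measurable (Function.uncurry G) :=
    Measurable.ite (measurableSet_lt (by fun_prop) (by fun_prop)) (by fun_prop) measurable_const
  have hGle : ∀ y, ∫⁻ x in B, G x y ∂μ ≤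
      ∫⁻ x in ball 0 (‖y‖ ^ lam), ENNReal.ofReal (‖x - y‖ ^ (-s)) ∂μ := by
    intro y
    calc ∫⁻ x in B, G x y ∂μ ≤ ∫⁻ x, G x y ∂μ := setLIntegral_le_lintegral _ _
      _ = ∫⁻ x, (ball 0 (‖y‖ ^ lam)).indicator (fun x => ENNReal.ofReal (‖x - y‖ ^ (-s))) x ∂μ :=
        lintegral_congr fun x => by by_cases hx : ‖x‖ < ‖y‖ ^ lam <;> simp [G, hx]
      _ = _ := lintegral_indicator measurableSet_ball _
  have hpair : ∀ x ∈ B, ∀ y ∈ B, (if 1 < |logLogProfile lam x - logLogProfile lam y|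
      then ENNReal.ofReal (‖x - y‖ ^ (-s)) else 0) ≤ G x y + G y x := by
    intro x hx y hy
    split_ifs with h
    · rcases norm_lt_rpow_or_of_one_lt_abs_sub hlam (mem_ball_zero_iff.1 hx)
        (mem_ball_zero_iff.1 hy) h with hxy | hyx
      · simp only [G, if_pos hxy]
        exact le_self_add
      · simp only [G, if_pos hyx, norm_sub_rev y x]
        exact le_add_self
    · exact zero_le
  calc _ ≤ ∫⁻ x in B, ∫⁻ y in B, (G x y + G y x) ∂μ ∂μ :=
        setLIntegral_mono' measurableSet_ball fun x hx =>
          setLIntegral_mono' measurableSet_ball (hpair x hx)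
    _ = ∫⁻ x in B, ∫⁻ y in B, G x y ∂μ ∂μ + ∫⁻ x in B, ∫⁻ y in B, G y x ∂μ ∂μ := by
        rw [← lintegral_add_left hG.lintegral_prod_right]
        exact lintegral_congr fun x => lintegral_add_left (hG.comp measurable_prodMk_left) _
    _ = ∫⁻ y in B, ∫⁻ x in B, G x y ∂μ ∂μ + ∫⁻ x in B, ∫⁻ y in B, G y x ∂μ ∂μ := by
        rw [lintegral_lintegral_swap hG.aemeasurable]
    _ ≤ _ := by
        rw [two_mul]
        exact add_le_add (lintegral_mono hGle) (lintegral_mono hGle)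

lemma nlI_one_eq (d : ℕ) (p : ℝ) (u : EuclideanSpace ℝ (Fin d) → ℝ)
    (O : Set (EuclideanSpace ℝ (Fin d))) :
    nlI d p 1 u O = ∫⁻ x in O, ∫⁻ y in O,
      (if 1 < |u x - u y| then ENNReal.ofReal (‖x - y‖ ^ (-((d : ℝ) + p))) else 0) := by
  refine lintegral_congr fun x => lintegral_congr fun y => ?_
  rw [Real.one_rpow, one_div, ← rpow_neg (norm_nonneg _)]

/-- an unbounded function with finite nonlocal energy. -/
theorem stmt14 (d : ℕ) (hd : 1 ≤ d) (p : ℝ) (hp : (d : ℝ) ≤ p) (lam : ℝ) (hlam : p / d < lam) :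
    IntegrableOn
        (fun x : EuclideanSpace ℝ (Fin d) =>
          (Real.log lam)⁻¹ * Real.log (Real.log (1 / ‖x‖)))
        (Metric.ball 0 (1 / Real.exp 1)) ∧
    (∀ C : ℝ,
      ¬ (∀ᵐ x ∂(volume.restrict (Metric.ball (0 : EuclideanSpace ℝ (Fin d)) (1 / Real.exp 1))),
          |(Real.log lam)⁻¹ * Real.log (Real.log (1 / ‖x‖))| ≤ C)) ∧
    nlI d p 1 (fun x => (Real.log lam)⁻¹ * Real.log (Real.log (1 / ‖x‖)))
        (Metric.ball 0 (1 / Real.exp 1)) < ⊤ := by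
  have hd0 : (0 : ℝ) < d := by exact_mod_cast hd
  have hlam1 : 1 < lam := ((one_le_div hd0).2 hp).trans_lt hlam
  have hpd : p < lam * d := (div_lt_iff₀ hd0).1 hlam
  have hrank : finrank ℝ (EuclideanSpace ℝ (Fin d)) = d := finrank_euclideanSpace_fin
  have : Nontrivial (EuclideanSpace ℝ (Fin d)) :=
    Module.nontrivial_of_finrank_pos (R := ℝ) (by omega)
  change IntegrableOn (logLogProfile lam) _ _ ∧ (∀ C : ℝ, ¬ ∀ᵐ x ∂_, |logLogProfile lam x| ≤ C) ∧
    nlI d p 1 (logLogProfile lam) _ < ⊤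
  refine ⟨integrableOn_logLogProfile volume (by omega) lam, fun C => ?_, ?_⟩
  · exact not_ae_restrict_le_of_tendsto_atTop (ball_mem_nhds 0 (by positivity))
      (tendsto_abs_atTop_atTop.comp (tendsto_logLogProfile hlam1)) C
  · rw [nlI_one_eq]
    exact (lintegral_lintegral_one_lt_abs_sub_le volume hlam1 _).trans_lt <|
      ENNReal.mul_lt_top (by simp) <|
        lintegral_setLIntegral_ball_rpow_lam_lt_top volume (by omega) one_div_exp_one_lt_one
          hlam1 (by linarith) (by rw [hrank]; linarith)
end

section
/- Let d ≥ 1 be an integer, let λ > 1, and define u on the ball B_{1/e} ⊆ ℝ^d by u(x) = (ln λ)^{-1} ln ln (1/|x|). Then for every γ > λ, every α > 0, and every τ with 0 < τ < 1/e, one has ∫_{B_τ} exp( α γ^{u(x)} ) dx = +∞. -/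
open MeasureTheory Real Filter ENNReal

/-!
With `t = log (1 / ‖x‖)` the exponent is `γ ^ (log t / log λ) = t ^ β` for `β = log γ / log λ > 1`,
so for `‖x‖` small it dominates `(d + 1) t`, and the integrand is at least
`exp ((d + 1) t) = ‖x‖ ^ (-(d + 1))`. This singularity is not integrable at the origin of `ℝ^d`:
in polar coordinates it becomes `r ^ (d - 1 - (d + 1)) = r ^ (-2)` on `(0, ρ)`.
-/

open Topology

section

variable {E : Type*} [NormedAddCommGroup E] [NormedSpace ℝ E] [Nontrivial E]
  [FiniteDimensional ℝ E] [MeasurableSpace E] [BorelSpace E] (μ : Measure E) [μ.IsAddHaarMeasure]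

open Set Metric

theorem not_integrableOn_ball_norm_rpow_neg {r s : ℝ} (hr : 0 < r)
    (hs : (Module.finrank ℝ E : ℝ) ≤ s) :
    ¬ IntegrableOn (fun x : E ↦ ‖x‖ ^ (-s)) (ball 0 r) μ := by
  rw [integrableOn_fun_norm_addHaar μ (f := fun y ↦ y ^ (-s))]
  intro h
  have hpow : IntegrableOn (fun y : ℝ ↦ y ^ ((Module.finrank ℝ E : ℝ) - 1 - s)) (Ioo 0 r) := by
    refine h.congr_fun (fun y hy ↦ ?_) measurableSet_Ioo
    dsimp only
    rw [smul_eq_mul, ← Real.rpow_natCast, ← Real.rpow_add hy.1]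
    push_cast [Nat.one_le_iff_ne_zero.2 Module.finrank_pos.ne']
    ring_nf
  rw [intervalIntegral.integrableOn_Ioo_rpow_iff hr] at hpow
  linarith

theorem lintegral_ball_norm_rpow_neg_eq_top {r s : ℝ} (hr : 0 < r)
    (hs : (Module.finrank ℝ E : ℝ) ≤ s) :
    ∫⁻ x in ball 0 r, ENNReal.ofReal (‖x‖ ^ (-s)) ∂μ = ∞ := by
  by_contra h
  refine not_integrableOn_ball_norm_rpow_neg μ hr hs ?_
  refine (lintegral_ofReal_ne_top_iff_integrable ?_ ?_).1 h
  · exact (continuous_norm.measurable.pow_const _).aestronglyMeasurable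
  · exact ae_of_all _ fun x ↦ by positivity

end

theorem rpow_mul_log_comm {a t : ℝ} (ha : 0 < a) (ht : 0 < t) (c : ℝ) :
    a ^ (c * Real.log t) = t ^ (c * Real.log a) := by
  rw [rpow_def_of_pos ha, rpow_def_of_pos ht]
  ring_nf

theorem eventually_mul_le_mul_rpow {s α β : ℝ} (hα : 0 < α) (hβ : 1 < β) :
    ∀ᶠ t in atTop, s * t ≤ α * t ^ β := by
  have hlarge : ∀ᶠ t : ℝ in atTop, s / α ≤ t ^ (β - 1) :=
    (tendsto_rpow_atTop (by linarith)).eventually_ge_atTop _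
  filter_upwards [hlarge, eventually_gt_atTop 0] with t ht ht0
  calc s * t = s / α * t * α := by field_simp
    _ ≤ t ^ (β - 1) * t * α := by gcongr
    _ = α * t ^ β := by rw [← rpow_add_one ht0.ne']; ring_nf

theorem eventually_rpow_neg_le_exp_rpow_log_log {α lam γ : ℝ} (hα : 0 < α) (hlam : 1 < lam)
    (hγ : lam < γ) (s : ℝ) :
    ∀ᶠ ρ in 𝓝[>] 0,
      ρ ^ (-s) ≤ exp (α * γ ^ ((Real.log lam)⁻¹ * Real.log (Real.log (1 / ρ)))) := by
  have hβ : 1 < (Real.log lam)⁻¹ * Real.log γ := by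
    rw [← div_eq_inv_mul, one_lt_div (log_pos hlam)]
    exact log_lt_log (by linarith) hγ
  have hlog : Tendsto (fun ρ : ℝ ↦ Real.log (1 / ρ)) (𝓝[>] 0) atTop := by
    refine (tendsto_neg_atBot_atTop.comp tendsto_log_nhdsGT_zero).congr fun ρ ↦ ?_
    simp [Real.log_inv]
  filter_upwards [hlog.eventually (eventually_mul_le_mul_rpow (s := s) hα hβ),
    hlog.eventually (eventually_gt_atTop 0), self_mem_nhdsWithin] with ρ ht ht0 hρ
  rw [rpow_mul_log_comm (by linarith) ht0, rpow_def_of_pos hρ]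
  refine exp_le_exp.2 (le_trans (le_of_eq ?_) ht)
  rw [one_div, Real.log_inv]
  ring

theorem stmt15_general (d : ℕ) (hd : 1 ≤ d) (lam : ℝ) (hlam : 1 < lam) (γ : ℝ) (hγ : lam < γ)
    (α : ℝ) (hα : 0 < α) (τ : ℝ) (hτ1 : 0 < τ) :
    ∫⁻ x in Metric.ball (0 : EuclideanSpace ℝ (Fin d)) τ,
        ENNReal.ofReal
          (Real.exp (α * γ ^ ((Real.log lam)⁻¹ * Real.log (Real.log (1 / ‖x‖))))) = ⊤ := by
  have : Nontrivial (EuclideanSpace ℝ (Fin d)) :=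
    Module.nontrivial_of_finrank_pos (R := ℝ) (by rw [finrank_euclideanSpace_fin]; omega)
  obtain ⟨δ, hδ, hbound⟩ := (nhdsGT_basis (0 : ℝ)).eventually_iff.1
    (eventually_rpow_neg_le_exp_rpow_log_log hα hlam hγ (d + 1))
  have hρ : 0 < min τ δ := lt_min hτ1 hδ
  have hsing := lintegral_ball_norm_rpow_neg_eq_top
    (volume : Measure (EuclideanSpace ℝ (Fin d))) hρ (s := d + 1) (by simp)
  refine eq_top_mono (le_trans ?_ (lintegral_mono_set (Metric.ball_subset_ball (min_le_left τ δ))))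
    hsing
  refine setLIntegral_mono' measurableSet_ball fun x hx ↦ ENNReal.ofReal_le_ofReal ?_
  rcases eq_or_ne x 0 with rfl | hx0
  · rw [norm_zero, zero_rpow (neg_ne_zero.2 (by positivity))]
    positivity
  · exact hbound ⟨norm_pos_iff.2 hx0, (mem_ball_zero_iff.1 hx).trans_le (min_le_right _ _)⟩

/-- divergence of the exponential integral for the log-log function. -/
theorem stmt15 (d : ℕ) (hd : 1 ≤ d) (lam : ℝ) (hlam : 1 < lam) (γ : ℝ) (hγ : lam < γ)
    (α : ℝ) (hα : 0 < α) (τ : ℝ) (hτ1 : 0 < τ) (hτ2 : τ < 1 / Real.exp 1) :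
    ∫⁻ x in Metric.ball (0 : EuclideanSpace ℝ (Fin d)) τ,
        ENNReal.ofReal
          (Real.exp (α * γ ^ ((Real.log lam)⁻¹ * Real.log (Real.log (1 / ‖x‖))))) = ⊤ :=
  stmt15_general d hd lam hlam γ hγ α hα τ hτ1
end

section
/- Let s > 1 and λ > s be real numbers, and define g on the interval I = (0, 1/e) by g(r) = (ln λ)^{-1} ln ln (1/r). Then ∬_{{(r_1, r_2) ∈ I × I : |g(r_1) - g(r_2)| > 1}} |r_1 - r_2|^{-(1+s)} dr_1 dr_2 < +∞. -/
/-!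
With `g r = log (log (1/r)) / log λ`, the inequality `g r₁ - g r₂ > 1` says exactly
`r₁ < r₂ ^ λ`, so the region of integration lies in the two cusps `r₁ < r₂ ^ λ` and
`r₂ < r₁ ^ λ` at the origin. On the cusp over `r`, the distance to the other point is at least
`r - r ^ λ ≥ c r` with `c = 1 - e ^ (1 - λ) > 0`, and the cusp has width `r ^ λ`, so integrating
out the other variable leaves `r ^ λ (c r) ^ (-(1 + s))`, which is integrable at `0` precisely
because `λ > s`.
-/

open MeasureTheory Real ENNReal

theorem lt_rpow_iff_log_lt_log_log_sub {x y lam : ℝ} (hx₀ : 0 < x) (hx₁ : x < 1) (hy₀ : 0 < y)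
    (hy₁ : y < 1) (hlam : 0 < lam) :
    x < y ^ lam ↔ log lam < log (log (1 / x)) - log (log (1 / y)) := by
  have hx : 0 < -log x := neg_pos.2 (log_neg hx₀ hx₁)
  have hy : 0 < -log y := neg_pos.2 (log_neg hy₀ hy₁)
  rw [one_div, one_div, Real.log_inv, Real.log_inv, ← log_div hx.ne' hy.ne',
    log_lt_log_iff hlam (by positivity), lt_div_iff₀ hy,
    ← log_lt_log_iff hx₀ (rpow_pos_of_pos hy₀ lam), log_rpow hy₀]
  constructor <;> intro h <;> linarith

theorem lt_rpow_or_lt_rpow_of_one_lt_abs_sub {x y lam : ℝ} (hx : x ∈ Set.Ioo 0 1)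
    (hy : y ∈ Set.Ioo 0 1) (hlam : 1 < lam)
    (h : 1 < |(log lam)⁻¹ * log (log (1 / x)) - (log lam)⁻¹ * log (log (1 / y))|) :
    x < y ^ lam ∨ y < x ^ lam := by
  have hlog : 0 < log lam := log_pos hlam
  rw [← mul_sub, abs_mul, abs_of_pos (inv_pos.2 hlog), ← div_eq_inv_mul, one_lt_div hlog] at h
  rcases lt_abs.1 h with h | h
  · exact .inl ((lt_rpow_iff_log_lt_log_log_sub hx.1 hx.2 hy.1 hy.2 (by linarith)).2 h)
  · exact .inr ((lt_rpow_iff_log_lt_log_log_sub hy.1 hy.2 hx.1 hx.2 (by linarith)).2 (by linarith))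

theorem mul_one_sub_rpow_le_sub_rpow {x a lam : ℝ} (hx : 0 < x) (hxa : x ≤ a) (hlam : 1 ≤ lam) :
    (1 - a ^ (lam - 1)) * x ≤ x - x ^ lam := by
  have hsplit : x ^ lam = x * x ^ (lam - 1) := by
    rw [← rpow_one_add' hx.le (by linarith), add_sub_cancel]
  have hle : x ^ (lam - 1) ≤ a ^ (lam - 1) := rpow_le_rpow hx.le hxa (by linarith)
  rw [hsplit]
  nlinarith

noncomputable def cuspKernel (lam p x y : ℝ) : ℝ≥0∞ :=
  if x < y ^ lam then ENNReal.ofReal (|x - y| ^ (-p)) else 0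

theorem measurable_uncurry_cuspKernel (lam p : ℝ) :
    Measurable (Function.uncurry (cuspKernel lam p)) :=
  Measurable.ite (measurableSet_lt measurable_fst (by fun_prop)) (by fun_prop) measurable_const

section CuspBounds

variable {a lam p : ℝ}

theorem cuspKernel_le_indicator (hlam : 1 < lam) (hp : 0 ≤ p) (ha₁ : a < 1) {x : ℝ}
    (hx : x ∈ Set.Ioo 0 a) (y : ℝ) :
    cuspKernel lam p y x ≤
      (Set.Iio (x ^ lam)).indicator (fun _ => ENNReal.ofReal ((x - x ^ lam) ^ (-p))) y := by
  unfold cuspKernel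
  split_ifs with hyx
  · have hxx : x ^ lam < x := rpow_lt_self_of_lt_one hx.1 (hx.2.trans ha₁) hlam
    rw [Set.indicator_of_mem (Set.mem_Iio.2 hyx), abs_sub_comm, abs_of_pos (by linarith)]
    exact ofReal_le_ofReal (rpow_le_rpow_of_nonpos (by linarith) (by linarith) (by linarith))
  · exact zero_le

theorem setLIntegral_cuspKernel_le (hlam : 1 < lam) (hp : 0 ≤ p) (ha₁ : a < 1) {x : ℝ}
    (hx : x ∈ Set.Ioo 0 a) :
    ∫⁻ y in Set.Ioo 0 a, cuspKernel lam p y x ≤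
      ENNReal.ofReal ((1 - a ^ (lam - 1)) ^ (-p) * x ^ (lam - p)) := by
  have hc : 0 < 1 - a ^ (lam - 1) :=
    sub_pos.2 (rpow_lt_one (hx.1.trans hx.2).le ha₁ (by linarith))
  have hgap := mul_one_sub_rpow_le_sub_rpow hx.1 hx.2.le hlam.le
  have hwidth : volume.restrict (Set.Ioo 0 a) (Set.Iio (x ^ lam)) ≤ ENNReal.ofReal (x ^ lam) := by
    rw [Measure.restrict_apply measurableSet_Iio]
    calc volume (Set.Iio (x ^ lam) ∩ Set.Ioo 0 a)
        ≤ volume (Set.Ioo 0 (x ^ lam)) := measure_mono fun y hy => ⟨hy.2.1, hy.1⟩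
      _ = ENNReal.ofReal (x ^ lam) := by rw [Real.volume_Ioo, sub_zero]
  calc ∫⁻ y in Set.Ioo 0 a, cuspKernel lam p y x
      ≤ ∫⁻ y in Set.Ioo 0 a,
          (Set.Iio (x ^ lam)).indicator (fun _ => ENNReal.ofReal ((x - x ^ lam) ^ (-p))) y :=
        lintegral_mono (cuspKernel_le_indicator hlam hp ha₁ hx)
    _ ≤ ENNReal.ofReal ((x - x ^ lam) ^ (-p)) * ENNReal.ofReal (x ^ lam) := by
        rw [lintegral_indicator measurableSet_Iio, setLIntegral_const]
        exact mul_le_mul_right hwidth _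
    _ = ENNReal.ofReal ((x - x ^ lam) ^ (-p) * x ^ lam) :=
        (ENNReal.ofReal_mul (Real.rpow_nonneg (by linarith [mul_pos hc hx.1]) _)).symm
    _ ≤ ENNReal.ofReal ((1 - a ^ (lam - 1)) ^ (-p) * x ^ (lam - p)) := by
        refine ofReal_le_ofReal ?_
        calc (x - x ^ lam) ^ (-p) * x ^ lam
            ≤ ((1 - a ^ (lam - 1)) * x) ^ (-p) * x ^ lam :=
              mul_le_mul_of_nonneg_right (rpow_le_rpow_of_nonpos (mul_pos hc hx.1) hgap
                (by linarith)) (Real.rpow_nonneg hx.1.le _)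
          _ = (1 - a ^ (lam - 1)) ^ (-p) * x ^ (lam - p) := by
              rw [mul_rpow hc.le hx.1.le, mul_assoc, ← rpow_add hx.1]
              ring_nf

theorem lintegral_lintegral_cuspKernel_lt_top (hlam : 1 < lam) (hp : 0 ≤ p) (hpl : p < lam + 1)
    (ha₀ : 0 < a) (ha₁ : a < 1) :
    ∫⁻ x in Set.Ioo 0 a, ∫⁻ y in Set.Ioo 0 a, cuspKernel lam p y x < ⊤ := by
  have hint : IntegrableOn (fun x => (1 - a ^ (lam - 1)) ^ (-p) * x ^ (lam - p)) (Set.Ioo 0 a) :=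
    ((intervalIntegral.integrableOn_Ioo_rpow_iff ha₀).2 (by linarith)).const_mul _
  calc ∫⁻ x in Set.Ioo 0 a, ∫⁻ y in Set.Ioo 0 a, cuspKernel lam p y x
      ≤ ∫⁻ x in Set.Ioo 0 a, ENNReal.ofReal ((1 - a ^ (lam - 1)) ^ (-p) * x ^ (lam - p)) :=
        setLIntegral_mono' measurableSet_Ioo fun x hx => setLIntegral_cuspKernel_le hlam hp ha₁ hx
    _ < ⊤ := hint.lintegral_lt_top

theorem lintegral_lintegral_cuspKernel_add_swap_lt_top (hlam : 1 < lam) (hp : 0 ≤ p)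
    (hpl : p < lam + 1) (ha₀ : 0 < a) (ha₁ : a < 1) :
    ∫⁻ x in Set.Ioo 0 a, ∫⁻ y in Set.Ioo 0 a, (cuspKernel lam p x y + cuspKernel lam p y x)
      < ⊤ := by
  have hK := measurable_uncurry_cuspKernel lam p
  have hfin := lintegral_lintegral_cuspKernel_lt_top hlam hp hpl ha₀ ha₁
  have hinner (x : ℝ) :
      ∫⁻ y in Set.Ioo 0 a, (cuspKernel lam p x y + cuspKernel lam p y x) =
        (∫⁻ y in Set.Ioo 0 a, cuspKernel lam p x y) + ∫⁻ y in Set.Ioo 0 a, cuspKernel lam p y x :=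
    lintegral_add_left (hK.comp measurable_prodMk_left) _
  rw [lintegral_congr hinner,
    lintegral_add_left (f := fun x => ∫⁻ y in Set.Ioo 0 a, cuspKernel lam p x y)
      hK.lintegral_prod_right',
    lintegral_lintegral_swap hK.aemeasurable]
  exact add_lt_top.2 ⟨hfin, hfin⟩

end CuspBounds

/-- finiteness of the 1D nonlocal integral for the log-log function. -/
theorem stmt16 (s lam : ℝ) (hs : 1 < s) (hlam : s < lam) :
    (∫⁻ r₁ in Set.Ioo (0 : ℝ) (1 / Real.exp 1), ∫⁻ r₂ in Set.Ioo (0 : ℝ) (1 / Real.exp 1),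
        (if 1 < |(Real.log lam)⁻¹ * Real.log (Real.log (1 / r₁)) -
              (Real.log lam)⁻¹ * Real.log (Real.log (1 / r₂))| then
          ENNReal.ofReal (|r₁ - r₂| ^ (-(1 + s))) else 0)) < ⊤ := by
  have ha₀ : 0 < 1 / exp 1 := by positivity
  have ha₁ : 1 / exp 1 < 1 := by rw [div_lt_one (exp_pos 1)]; exact one_lt_exp_iff.2 one_pos
  have hI : Set.Ioo 0 (1 / exp 1) ⊆ Set.Ioo 0 1 := Set.Ioo_subset_Ioo_right ha₁.le
  refine lt_of_le_of_lt ?_ (lintegral_lintegral_cuspKernel_add_swap_lt_top (p := 1 + s)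
    (hs.trans hlam) (by linarith) (by linarith) ha₀ ha₁)
  refine setLIntegral_mono' measurableSet_Ioo fun x hx => ?_
  refine setLIntegral_mono' measurableSet_Ioo fun y hy => ?_
  split_ifs with hxy
  · rcases lt_rpow_or_lt_rpow_of_one_lt_abs_sub (hI hx) (hI hy) (hs.trans hlam) hxy with h | h
    · exact le_add_right (by simp [cuspKernel, h])
    · exact le_add_left (by simp [cuspKernel, h, abs_sub_comm])
  · exact zero_le
end

section
/- Let d ≥ 1 be an integer and p ≥ 1 a real number. Let g be a measurable function on (0, 1/e) and define the radial function u on B_{1/e} ⊆ ℝ^d by u(x) = g(|x|). Then there exists a constant C_d > 0 depending only on d such that I_{1,p}(u, B_{1/e}) ≤ C_d ∬_{{(r_1, r_2) ∈ (0,1/e)² : |g(r_1) - g(r_2)| > 1}} r_1^{d-1} r_2^{d-1} / |r_1 - r_2|^{p+d} dr_1 dr_2. -/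
/-! Since `‖x - y‖ ≥ |‖x‖ - ‖y‖|`, replacing the kernel by `|‖x‖ - ‖y‖|^{-(d+p)}` only increases
the energy, and the new integrand depends on `x` and `y` through their norms alone. Polar
coordinates in each variable separately then produce the weights `r₁^{d-1} r₂^{d-1}`, and the
constant is the square of the area of the unit sphere. -/

open MeasureTheory Real Filter ENNReal

open Set Metric Module Function

section Polar

variable {E : Type*} [NormedAddCommGroup E] [NormedSpace ℝ E] [MeasurableSpace E] [BorelSpace E]
  [Nontrivial E] [FiniteDimensional ℝ E] (μ : Measure E) [μ.IsAddHaarMeasure]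

theorem lintegral_fun_norm_addHaar {f : ℝ → ℝ≥0∞} (hf : Measurable f) :
    ∫⁻ x, f ‖x‖ ∂μ =
      μ.toSphere univ * ∫⁻ r in Ioi 0, ENNReal.ofReal (r ^ (finrank ℝ E - 1)) * f r :=
  calc ∫⁻ x, f ‖x‖ ∂μ = ∫⁻ x : ({(0 : E)}ᶜ : Set E), f ‖x.1‖ ∂μ.comap (↑) := by
        rw [lintegral_subtype_comap (measurableSet_singleton _).compl (fun x => f ‖x‖),
          restrict_compl_singleton]
    _ = ∫⁻ x, f x.2 ∂μ.toSphere.prod (.volumeIoiPow (finrank ℝ E - 1)) := by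
        simpa using μ.measurePreserving_homeomorphUnitSphereProd.lintegral_comp_emb
          (Homeomorph.measurableEmbedding _) (f ∘ Subtype.val ∘ Prod.snd)
    _ = μ.toSphere univ * ∫⁻ r : Ioi (0 : ℝ), f r ∂.volumeIoiPow (finrank ℝ E - 1) := by
        rw [lintegral_prod (fun x : sphere (0 : E) 1 × Ioi (0 : ℝ) => f x.2)
          (hf.comp (measurable_subtype_coe.comp measurable_snd)).aemeasurable]
        simp [mul_comm]
    _ = _ := by
        rw [Measure.volumeIoiPow, lintegral_withDensity_eq_lintegral_mul _
          (measurable_subtype_coe.pow_const _).ennreal_ofReal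
          (g := fun r : Ioi (0 : ℝ) => f r) (hf.comp measurable_subtype_coe)]
        exact congrArg _ (lintegral_subtype_comap measurableSet_Ioi
          fun r => ENNReal.ofReal (r ^ (finrank ℝ E - 1)) * f r)

theorem setLIntegral_ball_fun_norm_addHaar {f : ℝ → ℝ≥0∞} (hf : Measurable f) (R : ℝ) :
    ∫⁻ x in ball 0 R, f ‖x‖ ∂μ =
      μ.toSphere univ * ∫⁻ r in Ioo 0 R, ENNReal.ofReal (r ^ (finrank ℝ E - 1)) * f r := by
  have hball : ∫⁻ x in ball 0 R, f ‖x‖ ∂μ = ∫⁻ x, (Iio R).indicator f ‖x‖ ∂μ := by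
    rw [← lintegral_indicator measurableSet_ball]
    congr 1 with x
    by_cases hx : ‖x‖ < R <;> simp [hx]
  rw [hball, lintegral_fun_norm_addHaar μ (hf.indicator measurableSet_Iio), ← Iio_inter_Ioi,
    ← Measure.restrict_restrict measurableSet_Iio, ← lintegral_indicator measurableSet_Iio]
  congr 2 with r
  by_cases hr : r < R <;> simp [hr]

theorem setLIntegral_ball_ball_fun_norm_addHaar {F : ℝ → ℝ → ℝ≥0∞}
    (hF : Measurable (uncurry F)) (R : ℝ) :
    ∫⁻ x in ball 0 R, ∫⁻ y in ball 0 R, F ‖x‖ ‖y‖ ∂μ ∂μ =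
      μ.toSphere univ ^ 2 * ∫⁻ r in Ioo 0 R, ∫⁻ s in Ioo 0 R,
        ENNReal.ofReal (r ^ (finrank ℝ E - 1)) * ENNReal.ofReal (s ^ (finrank ℝ E - 1)) *
          F r s := by
  set w := fun r : ℝ => ENNReal.ofReal (r ^ (finrank ℝ E - 1))
  have hinner : Measurable fun r => ∫⁻ s in Ioo 0 R, w s * F r s :=
    ((measurable_snd.pow_const _).ennreal_ofReal.mul hF).lintegral_prod_right
  calc _ = ∫⁻ x in ball (0 : E) R, μ.toSphere univ * (∫⁻ s in Ioo 0 R, w s * F ‖x‖ s) ∂μ :=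
        lintegral_congr fun x => setLIntegral_ball_fun_norm_addHaar μ hF.of_uncurry_left R
    _ = μ.toSphere univ *
          (μ.toSphere univ * ∫⁻ r in Ioo 0 R, w r * ∫⁻ s in Ioo 0 R, w s * F r s) := by
        rw [lintegral_const_mul' _ _ (measure_ne_top _ _),
          setLIntegral_ball_fun_norm_addHaar μ hinner]
    _ = _ := by
        rw [← mul_assoc, ← pow_two]
        congr 1
        refine lintegral_congr fun r => ?_
        rw [← lintegral_const_mul' _ _ ofReal_ne_top]
        simp only [w, mul_assoc]

end Polar

theorem div_norm_sub_rpow_le {E : Type*} [NormedAddCommGroup E] {c q : ℝ} (hc : 0 ≤ c)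
    (hq : 0 ≤ q) {x y : E} (hxy : ‖x‖ ≠ ‖y‖) :
    c / ‖x - y‖ ^ q ≤ c / |‖x‖ - ‖y‖| ^ q :=
  div_le_div_of_nonneg_left hc (rpow_pos_of_pos (abs_pos.2 (sub_ne_zero.2 hxy)) q)
    (rpow_le_rpow (abs_nonneg _) (abs_norm_sub_norm_le x y) hq)

theorem nlI_comp_norm_ball_le {d : ℕ} (hd : 1 ≤ d) {p δ : ℝ} (hp : 0 ≤ d + p) (hδ : 0 ≤ δ)
    {g : ℝ → ℝ} (hg : Measurable g) (R : ℝ) :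
    nlI d p δ (fun x => g ‖x‖) (ball (0 : EuclideanSpace ℝ (Fin d)) R) ≤
      (volume : Measure (EuclideanSpace ℝ (Fin d))).toSphere univ ^ 2 *
        ∫⁻ r in Ioo 0 R, ∫⁻ s in Ioo 0 R,
          if δ < |g r - g s| then
            ENNReal.ofReal (δ ^ p * r ^ ((d : ℝ) - 1) * s ^ ((d : ℝ) - 1) / |r - s| ^ (p + d))
          else 0 := by
  have : Nonempty (Fin d) := Fin.pos_iff_nonempty.mp hd
  set F : ℝ → ℝ → ℝ≥0∞ := fun r s =>
    if δ < |g r - g s| then ENNReal.ofReal (δ ^ p / |r - s| ^ ((d : ℝ) + p)) else 0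
  have hF : Measurable (uncurry F) :=
    Measurable.ite (measurableSet_lt measurable_const (by fun_prop)) (by fun_prop)
      measurable_const
  calc nlI d p δ (fun x => g ‖x‖) (ball 0 R)
      ≤ ∫⁻ x in ball (0 : EuclideanSpace ℝ (Fin d)) R,
          ∫⁻ y in ball (0 : EuclideanSpace ℝ (Fin d)) R, F ‖x‖ ‖y‖ := by
        refine lintegral_mono fun x => lintegral_mono fun y => ?_
        simp only [F]
        split_ifs with h
        · have hxy : ‖x‖ ≠ ‖y‖ := fun h' => by simp [h', hδ.not_gt] at h
          exact ofReal_le_ofReal (div_norm_sub_rpow_le (rpow_nonneg hδ p) hp hxy)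
        · exact le_rfl
    _ = _ := by
        rw [setLIntegral_ball_ball_fun_norm_addHaar _ hF, finrank_euclideanSpace_fin]
        congr 1
        refine setLIntegral_congr_fun measurableSet_Ioo fun r hr => ?_
        refine setLIntegral_congr_fun measurableSet_Ioo fun s hs => ?_
        simp only [F]
        split_ifs
        · rw [← ofReal_mul (pow_nonneg hr.1.le _),
            ← ofReal_mul (mul_nonneg (pow_nonneg hr.1.le _) (pow_nonneg hs.1.le _)),
            ← Real.rpow_natCast, ← Real.rpow_natCast, Nat.cast_sub hd, Nat.cast_one, add_comm p]
          ring_nf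
        · simp

/-- reduction of the nonlocal energy of a radial function to a 1D integral. -/
theorem stmt17 (d : ℕ) (hd : 1 ≤ d) :
    ∃ C : ℝ, 0 < C ∧ ∀ p : ℝ, 1 ≤ p → ∀ g : ℝ → ℝ, Measurable g →
      nlI d p 1 (fun x => g ‖x‖)
          (Metric.ball (0 : EuclideanSpace ℝ (Fin d)) (1 / Real.exp 1)) ≤
        ENNReal.ofReal C *
          ∫⁻ r₁ in Set.Ioo (0 : ℝ) (1 / Real.exp 1),
            ∫⁻ r₂ in Set.Ioo (0 : ℝ) (1 / Real.exp 1),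
              (if 1 < |g r₁ - g r₂| then
                ENNReal.ofReal
                  (r₁ ^ ((d : ℝ) - 1) * r₂ ^ ((d : ℝ) - 1) / |r₁ - r₂| ^ (p + d)) else 0) := by
  have : Nonempty (Fin d) := Fin.pos_iff_nonempty.mp hd
  set σ := (volume : Measure (EuclideanSpace ℝ (Fin d))).toSphere univ
  have hσ : 0 < σ.toReal := ENNReal.toReal_pos
    (Measure.measure_univ_ne_zero.2 (Measure.toSphere_ne_zero _)) (measure_ne_top _ _)
  refine ⟨σ.toReal ^ 2, by positivity, fun p hp g hg => ?_⟩
  rw [ofReal_pow ENNReal.toReal_nonneg, ofReal_toReal (measure_ne_top _ _)]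
  simpa only [Real.one_rpow, one_mul] using nlI_comp_norm_ball_le hd
    (add_nonneg d.cast_nonneg (zero_le_one.trans hp)) zero_le_one hg (1 / exp 1)
end

section
/- Let q > 1 and set q' = q/(q-1). For each integer n ≥ 3 define g_n on the interval I = (0, 1/e) by g_n(r) = (ln n)^{1/q} for 0 < r ≤ 1/n and g_n(r) = ln(1/r) / (ln n)^{1/q'} for 1/n ≤ r < 1/e. Then lim_{n → ∞} ∬_{{(r_1, r_2) ∈ I × I : |g_n(r_1) - g_n(r_2)| > 1}} |r_1 - r_2|^{-2} dr_1 dr_2 = 0. -/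
/-!
Write `l = log n`, `a = l ^ (1/q)` and `L = l ^ (1/q')`, so that `a * L = l`. Then
`g_n r = min a (log (1/r) / L)`, hence a jump `|g_n r₁ - g_n r₂| > 1` forces the larger
radius `s` of the pair to exceed both `e^L` times the smaller radius `r` and `e^L / n`.
There `|r₁ - r₂|⁻² ≤ 4 / s²`, and integrating first over `r < s / e^L`, then over
`s ∈ (e^L / n, 1/e)`, bounds the energy by `8 l e^{-L} = 8 L^{q'} e^{-L} → 0`.
-/

open MeasureTheory Real Filter ENNReal Set

theorem tendsto_div_exp_rpow_atTop {p : ℝ} (hp : 0 < p) :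
    Tendsto (fun y : ℝ => y / exp (y ^ p)) atTop (nhds 0) := by
  refine ((tendsto_rpow_mul_exp_neg_mul_atTop_nhds_zero p⁻¹ 1 one_pos).comp
    (tendsto_rpow_atTop hp)).congr' ?_
  filter_upwards [eventually_ge_atTop 0] with y hy
  simp only [Function.comp_apply, ← rpow_mul hy, mul_inv_cancel₀ hp.ne', Real.rpow_one,
    neg_one_mul, exp_neg, div_eq_mul_inv]

noncomputable def moserProfile (a L ν r : ℝ) : ℝ :=
  if r ≤ 1 / ν then a else Real.log (1 / r) / L

theorem moserProfile_eq_min {a L ν r : ℝ} (hL : 0 < L) (hν : 0 < ν) (hr : 0 < r)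
    (haL : a * L = Real.log ν) :
    moserProfile a L ν r = min a (Real.log (1 / r) / L) := by
  have : r ≤ 1 / ν ↔ a ≤ Real.log (1 / r) / L := by
    rw [le_div_iff₀ hL, haL, Real.log_le_log_iff hν (by positivity), le_one_div hr hν]
  by_cases h : r ≤ 1 / ν
  · rw [moserProfile, if_pos h, min_eq_left (this.1 h)]
  · rw [moserProfile, if_neg h, min_eq_right (le_of_not_ge (mt this.2 h))]

theorem exp_lt_of_one_lt_min_sub_min {a L ν r s : ℝ} (hL : 0 < L) (hν : 0 < ν)
    (hr : 0 < r) (hs : 0 < s) (haL : a * L = Real.log ν)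
    (h : 1 < min a (Real.log (1 / r) / L) - min a (Real.log (1 / s) / L)) :
    exp L / ν < s ∧ exp L * r < s := by
  have hs' : Real.log (1 / s) / L < a - 1 := by
    rcases min_choice a (Real.log (1 / s) / L) with h' | h' <;> rw [h'] at h <;>
      linarith [min_le_left a (Real.log (1 / r) / L)]
  have hmin : min a (Real.log (1 / s) / L) = Real.log (1 / s) / L :=
    min_eq_right (by linarith)
  rw [hmin] at h
  have hrs : Real.log (1 / s) / L + 1 < Real.log (1 / r) / L := by
    linarith [min_le_right a (Real.log (1 / r) / L)]
  rw [div_lt_iff₀ hL, sub_mul, haL, one_mul, one_div, Real.log_inv] at hs'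
  rw [div_add_one hL.ne', div_lt_div_iff_of_pos_right hL, one_div, one_div, Real.log_inv,
    Real.log_inv] at hrs
  constructor
  · calc exp L / ν = exp (L - Real.log ν) := by rw [exp_sub, exp_log hν]
      _ < exp (Real.log s) := exp_lt_exp.2 (by linarith)
      _ = s := exp_log hs
  · calc exp L * r = exp (L + Real.log r) := by rw [exp_add, exp_log hr]
      _ < exp (Real.log s) := exp_lt_exp.2 (by linarith)
      _ = s := exp_log hs

theorem abs_sub_rpow_neg_two_le {E x y : ℝ} (hE : 2 ≤ E) (hy : 0 < y) (hxy : E * y < x) :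
    |x - y| ^ (-2 : ℝ) ≤ 4 / x ^ 2 := by
  have hx : x / 2 ≤ x - y := by nlinarith
  have hx0 : 0 < x / 2 := by nlinarith
  rw [abs_of_pos (hx0.trans_le hx), rpow_neg (hx0.trans_le hx).le, Real.rpow_two,
    show 4 / x ^ 2 = ((x / 2) ^ 2)⁻¹ by field_simp; norm_num]
  gcongr

noncomputable def farKernel (E c x y : ℝ) : ℝ≥0∞ :=
  if c < x ∧ E * y < x then ENNReal.ofReal (|x - y| ^ (-2 : ℝ)) else 0

theorem measurable_farKernel (E c : ℝ) : Measurable (Function.uncurry (farKernel E c)) := by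
  refine Measurable.ite ?_ (by fun_prop) measurable_const
  exact (measurableSet_lt measurable_const measurable_fst).inter
    (measurableSet_lt (measurable_const.mul measurable_snd) measurable_fst)

theorem setLIntegral_farKernel_le {E c : ℝ} (hE : 2 ≤ E) (hc : 0 ≤ c) (b x : ℝ) :
    ∫⁻ y in Ioo 0 b, farKernel E c x y ≤
      ENNReal.ofReal (4 / E) * (Ioi c).indicator (fun x => ENNReal.ofReal x⁻¹) x := by
  by_cases hx : c < x
  · have hx0 : 0 < x := hc.trans_lt hx
    have hE0 : 0 < E := by linarith
    rw [indicator_of_mem (show x ∈ Ioi c from hx)]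
    calc ∫⁻ y in Ioo 0 b, farKernel E c x y
        ≤ ∫⁻ y in Ioo 0 b, (Iio (x / E)).indicator (fun _ => ENNReal.ofReal (4 / x ^ 2)) y := by
          refine setLIntegral_mono' measurableSet_Ioo fun y hy => ?_
          unfold farKernel
          split_ifs with h
          · rw [indicator_of_mem (show y ∈ Iio (x / E) from (lt_div_iff₀' hE0).2 h.2)]
            exact ENNReal.ofReal_le_ofReal (abs_sub_rpow_neg_two_le hE hy.1 h.2)
          · exact zero_le
      _ = ENNReal.ofReal (4 / x ^ 2) * volume (Iio (x / E) ∩ Ioo 0 b) := by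
          rw [lintegral_indicator_const measurableSet_Iio,
            Measure.restrict_apply measurableSet_Iio]
      _ ≤ ENNReal.ofReal (4 / x ^ 2) * volume (Ioo 0 (x / E)) := by
          gcongr
          exact fun y hy => ⟨hy.2.1, hy.1⟩
      _ = ENNReal.ofReal (4 / E) * ENNReal.ofReal x⁻¹ := by
          rw [Real.volume_Ioo, sub_zero, ← ENNReal.ofReal_mul (by positivity),
            ← ENNReal.ofReal_mul (by positivity)]
          congr 1
          field_simp
  · have : ∀ y, farKernel E c x y = 0 := fun y => if_neg fun h => hx h.1
    simp [this]

theorem setLIntegral_inv_indicator_Ioi_le {b c : ℝ} (hc : 0 < c) :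
    ∫⁻ x in Ioo 0 b, (Ioi c).indicator (fun x => ENNReal.ofReal x⁻¹) x ≤
      ENNReal.ofReal (Real.log (b / c)) := by
  rw [lintegral_indicator measurableSet_Ioi, Measure.restrict_restrict measurableSet_Ioi]
  by_cases hcb : c ≤ b
  · have hint : IntegrableOn (fun x : ℝ => x⁻¹) (Ioc c b) :=
      (intervalIntegrable_inv_iff.2 (Or.inr fun h => hc.not_ge (by
        rw [uIcc_of_le hcb] at h; exact h.1))).1
    calc ∫⁻ x in Ioi c ∩ Ioo 0 b, ENNReal.ofReal x⁻¹
        ≤ ∫⁻ x in Ioc c b, ENNReal.ofReal x⁻¹ :=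
          lintegral_mono_set fun x hx => ⟨hx.1, hx.2.2.le⟩
      _ = ENNReal.ofReal (∫ x in c..b, x⁻¹) := by
        rw [intervalIntegral.integral_of_le hcb, ofReal_integral_eq_lintegral_ofReal hint
          ((ae_restrict_iff' measurableSet_Ioc).2 (ae_of_all _ fun x hx =>
            inv_nonneg.2 (hc.trans hx.1).le))]
      _ = ENNReal.ofReal (Real.log (b / c)) := by
        rw [integral_inv_of_pos hc (hc.trans_le hcb)]
  · have : Ioi c ∩ Ioo 0 b = ∅ := by
      ext x; simp only [mem_inter_iff, mem_Ioi, mem_Ioo, mem_empty_iff_false, iff_false]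
      intro h; linarith [h.2.2]
    rw [this, Measure.restrict_empty, lintegral_zero_measure]
    exact zero_le

theorem lintegral_lintegral_add_swap {α : Type*} [MeasurableSpace α] {μ : Measure α}
    [SFinite μ] {f : α → α → ℝ≥0∞} (hf : Measurable (Function.uncurry f)) :
    ∫⁻ x, ∫⁻ y, (f x y + f y x) ∂μ ∂μ = 2 * ∫⁻ x, ∫⁻ y, f x y ∂μ ∂μ := by
  have hswap : Measurable (Function.uncurry fun x y => f y x) := hf.comp measurable_swap
  calc ∫⁻ x, ∫⁻ y, (f x y + f y x) ∂μ ∂μ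
      = ∫⁻ x, (∫⁻ y, f x y ∂μ + ∫⁻ y, f y x ∂μ) ∂μ :=
        lintegral_congr fun x => lintegral_add_left (hf.comp measurable_prodMk_left) _
    _ = ∫⁻ x, ∫⁻ y, f x y ∂μ ∂μ + ∫⁻ x, ∫⁻ y, f y x ∂μ ∂μ :=
        lintegral_add_left hf.lintegral_prod_right' _
    _ = 2 * ∫⁻ x, ∫⁻ y, f x y ∂μ ∂μ := by
        rw [lintegral_lintegral_swap hswap.aemeasurable, two_mul]

theorem lintegral_jump_energy_moserProfile_le {a L ν b : ℝ} (hL : 1 ≤ L) (hν : 0 < ν)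
    (haL : a * L = Real.log ν) (hb0 : 0 < b) (hb : b ≤ 1) :
    ∫⁻ r₁ in Ioo 0 b, ∫⁻ r₂ in Ioo 0 b,
      (if 1 < |moserProfile a L ν r₁ - moserProfile a L ν r₂| then
        ENNReal.ofReal (|r₁ - r₂| ^ (-(2 : ℝ))) else 0) ≤
      ENNReal.ofReal (8 * (Real.log ν / exp L)) := by
  set E := exp L
  set c := E / ν
  have hL0 : 0 < L := by linarith
  have hE : 2 ≤ E := by linarith [add_one_le_exp 1, exp_le_exp.2 hL]
  have hc : 0 < c := by positivity
  have hpoint : ∀ r₁ ∈ Ioo 0 b, ∀ r₂ ∈ Ioo 0 b,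
      (if 1 < |moserProfile a L ν r₁ - moserProfile a L ν r₂| then
        ENNReal.ofReal (|r₁ - r₂| ^ (-(2 : ℝ))) else 0) ≤
      farKernel E c r₁ r₂ + farKernel E c r₂ r₁ := by
    intro r₁ h₁ r₂ h₂
    rw [moserProfile_eq_min hL0 hν h₁.1 haL, moserProfile_eq_min hL0 hν h₂.1 haL]
    split_ifs with h
    · rcases lt_abs.1 h with h | h
      · obtain ⟨hc₂, hE₂⟩ := exp_lt_of_one_lt_min_sub_min hL0 hν h₁.1 h₂.1 haL h
        calc _ = farKernel E c r₂ r₁ := by rw [farKernel, if_pos ⟨hc₂, hE₂⟩, abs_sub_comm]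
          _ ≤ _ := le_add_self
      · rw [neg_sub] at h
        obtain ⟨hc₁, hE₁⟩ := exp_lt_of_one_lt_min_sub_min hL0 hν h₂.1 h₁.1 haL h
        calc _ = farKernel E c r₁ r₂ := by rw [farKernel, if_pos ⟨hc₁, hE₁⟩]
          _ ≤ _ := le_self_add
    · exact zero_le
  have hlog : Real.log (b / c) ≤ Real.log ν := by
    refine Real.log_le_log (by positivity) ((div_le_iff₀ hc).2 ?_)
    rw [mul_div_cancel₀ _ hν.ne']
    linarith
  calc _ ≤ ∫⁻ r₁ in Ioo 0 b, ∫⁻ r₂ in Ioo 0 b,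
          (farKernel E c r₁ r₂ + farKernel E c r₂ r₁) :=
        setLIntegral_mono' measurableSet_Ioo fun r₁ h₁ =>
          setLIntegral_mono' measurableSet_Ioo fun r₂ h₂ => hpoint r₁ h₁ r₂ h₂
    _ = 2 * ∫⁻ r₁ in Ioo 0 b, ∫⁻ r₂ in Ioo 0 b, farKernel E c r₁ r₂ :=
        lintegral_lintegral_add_swap (measurable_farKernel E c)
    _ ≤ 2 * ∫⁻ r₁ in Ioo 0 b,
          ENNReal.ofReal (4 / E) * (Ioi c).indicator (fun x => ENNReal.ofReal x⁻¹) r₁ := by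
        gcongr with r₁
        exact setLIntegral_farKernel_le hE hc.le b r₁
    _ ≤ 2 * (ENNReal.ofReal (4 / E) * ENNReal.ofReal (Real.log (b / c))) := by
        rw [lintegral_const_mul' _ _ ENNReal.ofReal_ne_top]
        gcongr
        exact setLIntegral_inv_indicator_Ioi_le hc
    _ ≤ ENNReal.ofReal (8 * (Real.log ν / E)) := by
        rw [← ENNReal.ofReal_mul (by positivity), ← ENNReal.ofReal_ofNat 2,
          ← ENNReal.ofReal_mul zero_le_two]
        refine ENNReal.ofReal_le_ofReal ?_
        have : 4 / E * Real.log (b / c) ≤ 4 / E * Real.log ν := by gcongr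
        linarith [show 8 * (Real.log ν / E) = 2 * (4 / E * Real.log ν) by ring]

/-- the 1D nonlocal energies of the Moser-type sequence tend to zero. -/
theorem stmt19 (q : ℝ) (hq : 1 < q) (q' : ℝ) (hq' : q' = q / (q - 1)) :
    Tendsto (fun n : ℕ =>
        ∫⁻ r₁ in Set.Ioo (0 : ℝ) (1 / Real.exp 1),
          ∫⁻ r₂ in Set.Ioo (0 : ℝ) (1 / Real.exp 1),
            (if 1 <
                |(if r₁ ≤ 1 / (n : ℝ) then (Real.log n) ^ (1 / q)
                  else Real.log (1 / r₁) / (Real.log n) ^ (1 / q')) -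
                 (if r₂ ≤ 1 / (n : ℝ) then (Real.log n) ^ (1 / q)
                  else Real.log (1 / r₂) / (Real.log n) ^ (1 / q'))| then
              ENNReal.ofReal (|r₁ - r₂| ^ (-(2 : ℝ))) else 0))
      atTop (nhds 0) := by
  have hconj : 1 / q + 1 / q' = 1 := by
    rw [hq']
    field_simp [(by linarith : q - 1 ≠ 0)]
    ring
  have hp : 0 < 1 / q' := by
    rw [hq', one_div_div]
    exact div_pos (by linarith) (by linarith)
  have hbound : Tendsto
      (fun n : ℕ => ENNReal.ofReal (8 * (Real.log n / exp (Real.log n ^ (1 / q')))))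
      atTop (nhds 0) := by
    simpa using ENNReal.tendsto_ofReal (((tendsto_div_exp_rpow_atTop hp).comp
      (tendsto_log_atTop.comp tendsto_natCast_atTop_atTop)).const_mul 8)
  refine tendsto_of_tendsto_of_tendsto_of_le_of_le' tendsto_const_nhds hbound
    (Eventually.of_forall fun _ => zero_le) ?_
  filter_upwards [eventually_ge_atTop 3] with n hn
  have hlog : 1 ≤ Real.log n := by
    rw [Real.le_log_iff_exp_le (by positivity)]
    linarith [exp_one_lt_d9, (Nat.ofNat_le_cast.2 hn : (3 : ℝ) ≤ n)]
  refine lintegral_jump_energy_moserProfile_le (one_le_rpow hlog hp.le) (by positivity) ?_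
    (by positivity) ((div_le_one (exp_pos 1)).2 (by linarith [add_one_le_exp (1 : ℝ)]))
  rw [← rpow_add (by linarith), hconj, Real.rpow_one]
end
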